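/- arXiv:1705.02297 — 8 statements merged into one kernel-verified Lean document; each statement's English description precedes it below -/
import Mathlib

section
/- Let f : ℝ^q → ℝ ∪ {±∞} be quasi-concave, let C ⊆ ℝ^q be a pointed polyhedral convex cone such that f is C-monotone on the set P[S] − C and the recession cone of P[S] is contained in C, and assume S ≠ ∅. Then the problem min f(Px) s.t. Ax ≥ b has an optimal solution x* ∈ S such that f(Px*) = min over the vertices y of the upper image 𝒫 := P[S] + C of f(y). -/
/-!
By Minkowski's resolution theorem, `S = conv V + cone W` for finite sets `V`, `W`; it is proved
by Fourier–Motzkin elimination on the homogenised cone `{(x, t) | A x ≥ t b, t ≥ 0}`. Every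
`w ∈ W` is a recession direction of `S`, so `P w ∈ C` and the upper image is
`𝒫 = conv (P V) + C`. For a pointed cone `C`, discarding redundant generators one at a time
shows `𝒫 = conv (vert 𝒫) + C`, where the vertices form a finite subset of `P V` lying in
`P[S]`. A vertex minimising `f` is optimal: quasi-concavity bounds `f` from below on
`conv (vert 𝒫)`, and `C`-monotonicity carries the bound over to `P[S] ⊆ conv (vert 𝒫) + C`.
-/

open Pointwise

namespace PointedCone

variable {M : Type*} [AddCommGroup M] [Module ℝ M]

lemma coe_add_self (K : PointedCone ℝ M) : (K : Set M) + K = K := by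
  rw [← Submodule.coe_sup, sup_idem]

lemma eq_zero_of_smul_add_smul_eq_zero {K : PointedCone ℝ M} (hK : (K : ConvexCone ℝ M).Salient)
    {x y : M} (hx : x ∈ K) (hy : y ∈ K) {t s : ℝ} (ht : 0 < t) (hs : 0 ≤ s)
    (h : t • x + s • y = 0) : x = 0 := by
  by_contra hx0
  refine hK (t • x) (smul_mem K ht.le hx) (smul_ne_zero ht.ne' hx0) ?_
  rw [neg_eq_of_add_eq_zero_right h]
  exact smul_mem K hs hy

lemma mem_hull_finset_iff {s : Finset M} {x : M} :
    x ∈ hull ℝ (s : Set M) ↔ ∃ μ : M → ℝ, (∀ y ∈ s, 0 ≤ μ y) ∧ ∑ y ∈ s, μ y • y = x := by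
  constructor
  · intro hx
    obtain ⟨μ, -, rfl⟩ := Submodule.mem_span_finset.1 hx
    exact ⟨fun y => μ y, fun y _ => (μ y).2, rfl⟩
  · rintro ⟨μ, hμ, rfl⟩
    exact Submodule.sum_mem _ fun y hy => smul_mem _ (hμ y hy) (subset_hull hy)

lemma map_mem_of_mem_hull {N : Type*} [AddCommGroup N] [Module ℝ N] (f : M →ₗ[ℝ] N)
    {s : Set M} {C : PointedCone ℝ N} (hs : ∀ y ∈ s, f y ∈ C) {x : M} (hx : x ∈ hull ℝ s) :
    f x ∈ C :=
  (Submodule.span_le (p := C.comap f)).2 hs hx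

lemma hull_union_neg_eq_top {s : Set M} (hs : Submodule.span ℝ s = ⊤) :
    hull ℝ (s ∪ -s) = ⊤ := by
  refine eq_top_iff.2 fun x _ => lineal_le _ ?_
  have hle : Submodule.span ℝ s ≤ (hull ℝ (s ∪ -s)).lineal :=
    Submodule.span_le.2 fun y hy =>
      mem_lineal.2 ⟨subset_hull (Or.inl hy), subset_hull (Or.inr (by simpa using hy))⟩
  exact hle (hs ▸ Submodule.mem_top)

lemma fg_top [FiniteDimensional ℝ M] : (⊤ : PointedCone ℝ M).FG := by
  obtain ⟨s, hs⟩ := Module.Finite.fg_top (R := ℝ) (M := M)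
  classical
  exact ⟨s ∪ -s, by rw [Finset.coe_union, Finset.coe_neg]; exact hull_union_neg_eq_top hs⟩

lemma eq_zero_of_mem_hull_of_neg {s : Finset M} {φ : Module.Dual ℝ M} (hs : ∀ g ∈ s, φ g < 0)
    {x : M} (hx : x ∈ hull ℝ (s : Set M)) (hφx : 0 ≤ φ x) : x = 0 := by
  obtain ⟨μ, hμ, rfl⟩ := mem_hull_finset_iff.1 hx
  have hterm : ∀ g ∈ s, μ g * φ g ≤ 0 := fun g hg =>
    mul_nonpos_of_nonneg_of_nonpos (hμ g hg) (hs g hg).le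
  have hsum : ∑ g ∈ s, μ g * φ g = 0 :=
    le_antisymm (Finset.sum_nonpos hterm) (by simpa [map_sum] using hφx)
  refine Finset.sum_eq_zero fun g hg => ?_
  have hμg := (mul_eq_zero.1 ((Finset.sum_eq_zero_iff_of_nonpos hterm).1 hsum g hg)).resolve_right
    (hs g hg).ne
  rw [hμg, zero_smul]

lemma mem_dual_id_singleton {φ : Module.Dual ℝ M} {x : M} :
    x ∈ dual (LinearMap.id : Module.Dual ℝ M →ₗ[ℝ] _) {φ} ↔ 0 ≤ φ x := by
  simp

lemma smul_add_neg_smul_mem_hull_image2 (φ : Module.Dual ℝ M) {s t : Set M} {n p : M}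
    (hn : n ∈ hull ℝ s) (hp : p ∈ hull ℝ t) :
    φ p • n + (-φ n) • p ∈ hull ℝ (Set.image2 (fun g u => φ u • g + (-φ g) • u) s t) := by
  -- `(n, p) ↦ φ p • n - φ n • p` is bilinear, so it suffices to check generators.
  set H := hull ℝ (Set.image2 (fun g u => φ u • g + (-φ g) • u) s t)
  have hmix : ∀ g ∈ s, φ p • g + (-φ g) • p ∈ H := fun g hg =>
    map_mem_of_mem_hull (φ.smulRight g + (-φ g) • LinearMap.id) (C := H)
      (fun u hu => subset_hull (Set.mem_image2_of_mem hg hu)) hp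
  exact map_mem_of_mem_hull (φ p • LinearMap.id + (-φ).smulRight p) (C := H) hmix hn

section FourierMotzkin

variable [DecidableEq M]

noncomputable def fourierMotzkin (φ : Module.Dual ℝ M) (G : Finset M) : Finset M :=
  G.filter (0 ≤ φ ·) ∪
    Finset.image₂ (fun g u => φ u • g + (-φ g) • u) (G.filter (φ · < 0)) (G.filter (0 ≤ φ ·))

lemma hull_fourierMotzkin_le (φ : Module.Dual ℝ M) (G : Finset M) :
    hull ℝ (fourierMotzkin φ G : Set M) ≤
      hull ℝ (G : Set M) ⊓ dual (LinearMap.id : Module.Dual ℝ M →ₗ[ℝ] _) {φ} := by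
  refine Submodule.span_le.2 fun y hy => ?_
  simp only [fourierMotzkin, Finset.coe_union, Set.mem_union, Finset.mem_coe,
    Finset.mem_image₂] at hy
  rcases hy with hy | ⟨g, hg, u, hu, rfl⟩
  · exact ⟨subset_hull (Finset.mem_filter.1 hy).1,
      mem_dual_id_singleton.2 (Finset.mem_filter.1 hy).2⟩
  · have hgN := Finset.mem_filter.1 hg
    have huP := Finset.mem_filter.1 hu
    refine ⟨Submodule.add_mem _ (smul_mem _ huP.2 (subset_hull hgN.1))
      (smul_mem _ (neg_nonneg.2 hgN.2.le) (subset_hull huP.1)), mem_dual_id_singleton.2 ?_⟩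
    simp only [map_add, map_smul, smul_eq_mul]
    linarith [mul_comm (φ u) (φ g)]

lemma inf_dual_singleton_le_hull_fourierMotzkin (φ : Module.Dual ℝ M) (G : Finset M) :
    hull ℝ (G : Set M) ⊓ dual (LinearMap.id : Module.Dual ℝ M →ₗ[ℝ] _) {φ} ≤
      hull ℝ (fourierMotzkin φ G : Set M) := by
  set N := G.filter (φ · < 0)
  set Pz := G.filter (0 ≤ φ ·)
  have hN : ∀ g ∈ N, φ g < 0 := fun g hg => (Finset.mem_filter.1 hg).2
  have hPz : ∀ u ∈ Pz, 0 ≤ φ u := fun u hu => (Finset.mem_filter.1 hu).2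
  have hG : G = N ∪ Pz := by
    ext y
    simp only [Finset.mem_union, Finset.mem_filter, N, Pz, ← and_or_left]
    exact (and_iff_left (lt_or_ge _ _)).symm
  intro x hx
  obtain ⟨hxG, hxφ⟩ := Submodule.mem_inf.1 hx
  rw [mem_dual_id_singleton] at hxφ
  rw [hG, Finset.coe_union, hull, Submodule.span_union, Submodule.mem_sup] at hxG
  obtain ⟨n, hn, p, hp, rfl⟩ := hxG
  have hφn : 0 ≤ -φ n := map_mem_of_mem_hull (-φ) (C := positive ℝ ℝ)
    (fun g hg => (mem_positive ℝ ℝ).2 (neg_nonneg.2 (hN g hg).le)) hn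
  have hφp : 0 ≤ φ p := map_mem_of_mem_hull φ (C := positive ℝ ℝ)
    (fun u hu => (mem_positive ℝ ℝ).2 (hPz u hu)) hp
  have hpFM : p ∈ hull ℝ (fourierMotzkin φ G : Set M) :=
    Submodule.span_mono (by simp [fourierMotzkin, Pz]) hp
  have hcross : φ p • n + (-φ n) • p ∈ hull ℝ (fourierMotzkin φ G : Set M) :=
    Submodule.span_mono (by simp [fourierMotzkin, N, Pz])
      (smul_add_neg_smul_mem_hull_image2 φ hn hp)
  rw [map_add] at hxφ
  rcases hφp.eq_or_lt with hφp0 | hφp0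
  · rwa [eq_zero_of_mem_hull_of_neg hN hn (by linarith), zero_add]
  · -- `n + p` is a nonnegative combination of `p` and the cross term, which lies on `φ = 0`.
    have hx : n + p = (φ p)⁻¹ • (φ p • n + (-φ n) • p) + (1 + φ n / φ p) • p := by
      match_scalars <;> field_simp
      ring
    have hcoeff : 0 ≤ 1 + φ n / φ p := by
      have := div_nonneg hxφ hφp0.le
      rwa [add_div, div_self hφp0.ne', add_comm] at this
    rw [hx]
    exact Submodule.add_mem _ (smul_mem _ (inv_nonneg.2 hφp0.le) hcross) (smul_mem _ hcoeff hpFM)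

end FourierMotzkin

lemma FG.inf_dual_singleton {C : PointedCone ℝ M} (hC : C.FG) (φ : Module.Dual ℝ M) :
    (C ⊓ dual (LinearMap.id : Module.Dual ℝ M →ₗ[ℝ] _) {φ}).FG := by
  classical
  obtain ⟨G, rfl⟩ := hC
  exact ⟨fourierMotzkin φ G, le_antisymm (hull_fourierMotzkin_le φ G)
    (inf_dual_singleton_le_hull_fourierMotzkin φ G)⟩

/-- The hard direction of the Minkowski–Weyl theorem. -/
theorem DualFG.fg [FiniteDimensional ℝ M] {C : PointedCone ℝ M}
    (hC : C.DualFG (LinearMap.id : Module.Dual ℝ M →ₗ[ℝ] _)) : C.FG := by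
  classical
  obtain ⟨s, rfl⟩ := hC
  induction s using Finset.induction_on with
  | empty => simpa using fg_top
  | insert φ s _ ih =>
    rw [Finset.coe_insert, dual_insert, inf_comm]
    exact FG.inf_dual_singleton ih φ

end PointedCone

section Polyhedron

variable {M : Type*} [AddCommGroup M] [Module ℝ M]
open PointedCone

lemma convex_setOf_mk_one_mem (K : PointedCone ℝ (M × ℝ)) :
    Convex ℝ {x : M | (x, (1 : ℝ)) ∈ K} := by
  intro x hx y hy a b ha hb hab
  simpa [hab] using K.convex hx hy ha hb hab

lemma mk_one_mem_of_mem_convexHull_add_hull {K : PointedCone ℝ (M × ℝ)} {V W : Set M}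
    (hV : ∀ v ∈ V, (v, (1 : ℝ)) ∈ K) (hW : ∀ w ∈ W, (w, (0 : ℝ)) ∈ K) {x : M}
    (hx : x ∈ convexHull ℝ V + (hull ℝ W : Set M)) : (x, (1 : ℝ)) ∈ K := by
  obtain ⟨y, hy, w, hw, rfl⟩ := hx
  have hyK : (y, (1 : ℝ)) ∈ K := convexHull_min hV (convex_setOf_mk_one_mem K) hy
  have hwK : (w, (0 : ℝ)) ∈ K := map_mem_of_mem_hull (LinearMap.inl ℝ M ℝ) hW hw
  simpa using add_mem hyK hwK

lemma mem_convexHull_add_hull_of_mk_one_mem_hull [DecidableEq M] {G : Finset (M × ℝ)}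
    (hG : ∀ g ∈ G, 0 ≤ g.2) {x : M} (hx : (x, (1 : ℝ)) ∈ hull ℝ (G : Set (M × ℝ))) :
    x ∈ convexHull ℝ (((G.filter (0 < ·.2)).image fun g => g.2⁻¹ • g.1 : Finset M) : Set M) +
      (hull ℝ (((G.filter (¬ 0 < ·.2)).image Prod.fst : Finset M) : Set M) : Set M) := by
  set Gp := G.filter (0 < ·.2)
  set G0 := G.filter (¬ 0 < ·.2)
  have hG0 : ∀ g ∈ G0, g.2 = 0 := fun g hg =>
    le_antisymm (not_lt.1 (Finset.mem_filter.1 hg).2) (hG g (Finset.mem_filter.1 hg).1)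
  obtain ⟨μ, hμ, hsum⟩ := mem_hull_finset_iff.1 hx
  have hfst : ∑ g ∈ Gp, μ g • g.1 + ∑ g ∈ G0, μ g • g.1 = x := by
    rw [Finset.sum_filter_add_sum_filter_not]
    simpa [Prod.fst_sum] using congrArg Prod.fst hsum
  have hsnd : ∑ g ∈ Gp, μ g * g.2 = 1 := by
    have := congrArg Prod.snd hsum
    rw [Prod.snd_sum, ← Finset.sum_filter_add_sum_filter_not G (0 < ·.2),
      Finset.sum_eq_zero (s := G0) fun g hg => by simp [hG0 g hg]] at this
    simpa using this
  have hrescale : ∀ g ∈ Gp, μ g • g.1 = (μ g * g.2) • (g.2⁻¹ • g.1) := fun g hg => by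
    rw [smul_smul, mul_assoc, mul_inv_cancel₀ (Finset.mem_filter.1 hg).2.ne', mul_one]
  rw [← hfst, Finset.sum_congr rfl hrescale]
  refine Set.add_mem_add ((convex_convexHull ℝ _).sum_mem
    (fun g hg => mul_nonneg (hμ g (Finset.filter_subset _ _ hg)) (Finset.mem_filter.1 hg).2.le)
    hsnd fun g hg => subset_convexHull ℝ _ (Finset.mem_image_of_mem _ hg)) ?_
  exact Submodule.sum_mem _ fun g hg =>
    smul_mem _ (hμ g (Finset.filter_subset _ _ hg)) (subset_hull (Finset.mem_image_of_mem _ hg))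

lemma exists_setOf_mk_one_mem_hull_eq [DecidableEq M] (G : Finset (M × ℝ))
    (hG : ∀ g ∈ G, 0 ≤ g.2) :
    ∃ V W : Finset M, {x : M | (x, (1 : ℝ)) ∈ hull ℝ (G : Set (M × ℝ))} =
      convexHull ℝ (V : Set M) + (hull ℝ (W : Set M) : Set M) := by
  refine ⟨_, _, Set.Subset.antisymm (fun x hx => mem_convexHull_add_hull_of_mk_one_mem_hull hG hx)
    (fun x hx => mk_one_mem_of_mem_convexHull_add_hull (K := hull ℝ (G : Set (M × ℝ)))
      (fun v hv => ?_) (fun w hw => ?_) hx)⟩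
  · obtain ⟨g, hg, rfl⟩ := Finset.mem_image.1 hv
    have hg' := Finset.mem_filter.1 hg
    have hscale : (g.2⁻¹ • g.1, (1 : ℝ)) = g.2⁻¹ • g :=
      Prod.ext rfl (by simp [inv_mul_cancel₀ hg'.2.ne'])
    rw [hscale]
    exact smul_mem _ (inv_nonneg.2 hg'.2.le) (subset_hull hg'.1)
  · obtain ⟨g, hg, rfl⟩ := Finset.mem_image.1 hw
    have hg' := Finset.mem_filter.1 hg
    have hg2 : (g.1, (0 : ℝ)) = g := Prod.ext rfl (le_antisymm (not_lt.1 hg'.2) (hG g hg'.1)).symm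
    rw [hg2]
    exact subset_hull hg'.1

lemma add_smul_mem_add_hull {B W : Set M} {x w : M} (hx : x ∈ B + (hull ℝ W : Set M))
    (hw : w ∈ W) {t : ℝ} (ht : 0 ≤ t) : x + t • w ∈ B + (hull ℝ W : Set M) := by
  obtain ⟨c, hc, h, hh, rfl⟩ := hx
  exact ⟨c, hc, h + t • w, add_mem hh (smul_mem _ ht (subset_hull hw)), (add_assoc c h _).symm⟩

/-- Minkowski's resolution theorem. -/
theorem exists_eq_convexHull_add_hull [FiniteDimensional ℝ M] {ι : Type*} [Finite ι]
    (a : ι → Module.Dual ℝ M) (b : ι → ℝ) :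
    ∃ V W : Finset M,
      {x | ∀ i, b i ≤ a i x} = convexHull ℝ (V : Set M) + (hull ℝ (W : Set M) : Set M) := by
  classical
  let ψ : ι → Module.Dual ℝ (M × ℝ) := fun i =>
    (a i).comp (LinearMap.fst ℝ M ℝ) - b i • LinearMap.snd ℝ M ℝ
  let K := dual (LinearMap.id : Module.Dual ℝ (M × ℝ) →ₗ[ℝ] _)
    (insert (LinearMap.snd ℝ M ℝ) (Set.range ψ))
  have hK : ∀ p, p ∈ K ↔ 0 ≤ p.2 ∧ ∀ i, b i * p.2 ≤ a i p.1 := fun p => by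
    simp [K, ψ, mul_comm]
  obtain ⟨G, hG⟩ : K.FG := DualFG.fg (DualFG.dual_of_finite _ ((Set.finite_range ψ).insert _))
  obtain ⟨V, W, hVW⟩ := exists_setOf_mk_one_mem_hull_eq G fun g hg =>
    ((hK g).1 (hG ▸ subset_hull hg)).1
  refine ⟨V, W, ?_⟩
  rw [← hVW]
  ext x
  simp [hG, hK]

end Polyhedron

section UpperImage

variable {M : Type*} [AddCommGroup M] [Module ℝ M] {K : PointedCone ℝ M}
open PointedCone

lemma mem_extremePoints_singleton_add_cone (hK : (K : ConvexCone ℝ M).Salient) (v : M) :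
    v ∈ ({v} + (K : Set M)).extremePoints ℝ := by
  rw [Set.singleton_add]
  refine mem_extremePoints.2 ⟨⟨0, K.zero_mem, add_zero v⟩, ?_⟩
  rintro _ ⟨k, hk, rfl⟩ _ ⟨k', hk', rfl⟩ ⟨t, s, ht, hs, hts, hv⟩
  have hsum : t • k + s • k' = 0 := by
    linear_combination (norm := module) hv - hts • v
  beta_reduce
  constructor
  · rw [eq_zero_of_smul_add_smul_eq_zero hK hk hk' ht hs.le hsum, add_zero]
  · rw [eq_zero_of_smul_add_smul_eq_zero hK hk' hk hs ht.le
      (by rw [add_comm]; exact hsum), add_zero]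

lemma mem_of_mem_extremePoints_add_cone {B : Set M} {e : M}
    (he : e ∈ (B + (K : Set M)).extremePoints ℝ) : e ∈ B := by
  obtain ⟨⟨p, hp, k, hk, rfl⟩, hext⟩ := mem_extremePoints.1 he
  have hseg : p + k ∈ openSegment ℝ p (p + (2 : ℝ) • k) :=
    ⟨1 / 2, 1 / 2, by norm_num, by norm_num, by norm_num, by module⟩
  have := (hext p ⟨p, hp, 0, K.zero_mem, add_zero p⟩ _
    ⟨p, hp, _, smul_mem K zero_le_two hk, rfl⟩ hseg).1
  rwa [← this]

lemma extremePoints_convexHull_add_cone_subset (V : Set M) :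
    (convexHull ℝ V + (K : Set M)).extremePoints ℝ ⊆ V := fun _ he =>
  extremePoints_convexHull_subset <| inter_extremePoints_subset_extremePoints_of_subset
    (Set.subset_add_left _ K.zero_mem) ⟨mem_of_mem_extremePoints_add_cone he, he⟩

lemma convexHull_insert_add_cone_eq {V : Set M} {v : M} (hv : v ∈ convexHull ℝ V + (K : Set M)) :
    convexHull ℝ (insert v V) + (K : Set M) = convexHull ℝ V + K := by
  refine (Set.add_subset_add_right (convexHull_mono (Set.subset_insert v V))).antisymm' ?_
  have hsub : convexHull ℝ (insert v V) ⊆ convexHull ℝ V + K :=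
    convexHull_min (Set.insert_subset hv ((subset_convexHull ℝ V).trans
      (Set.subset_add_left _ K.zero_mem))) ((convex_convexHull ℝ V).add K.convex)
  calc convexHull ℝ (insert v V) + (K : Set M) ⊆ convexHull ℝ V + K + K :=
        Set.add_subset_add_right hsub
    _ = convexHull ℝ V + K := by rw [add_assoc, K.coe_add_self]

lemma mem_extremePoints_convexHull_insert_add_cone (hK : (K : ConvexCone ℝ M).Salient)
    {V : Set M} {v : M} (hv : v ∉ convexHull ℝ V + (K : Set M)) :
    v ∈ (convexHull ℝ (insert v V) + (K : Set M)).extremePoints ℝ := by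
  rcases V.eq_empty_or_nonempty with rfl | hV
  · simpa using mem_extremePoints_singleton_add_cone hK v
  refine mem_extremePoints.2 ⟨Set.subset_add_left _ K.zero_mem
    (subset_convexHull ℝ _ (Set.mem_insert v V)), ?_⟩
  rw [convexHull_insert hV, convexJoin_singleton_left]
  rintro _ ⟨_, hy, k, hk, rfl⟩ _ ⟨_, hz, k', hk', rfl⟩ hseg
  obtain ⟨p, hp, a, b, ha, hb, hab, rfl⟩ := Set.mem_iUnion₂.1 hy
  obtain ⟨q, hq, a', b', ha', hb', hab', rfl⟩ := Set.mem_iUnion₂.1 hz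
  obtain ⟨t, s, ht, hs, hts, hvts⟩ := id hseg
  -- If `t b + s b' > 0`, solving `v = t y + s z` for `v` puts it in `conv V + K`.
  rcases (show 0 ≤ t * b + s * b' by positivity).eq_or_lt with hc | hc
  · have hb0 : b = 0 := by nlinarith
    have hb'0 : b' = 0 := by nlinarith
    obtain rfl : a = 1 := by linarith
    obtain rfl : a' = 1 := by linarith
    simp only [hb0, hb'0, one_smul, zero_smul, add_zero] at hseg ⊢
    exact (mem_extremePoints.1 (mem_extremePoints_singleton_add_cone hK v)).2 _
      ⟨v, rfl, k, hk, rfl⟩ _ ⟨v, rfl, k', hk', rfl⟩ hseg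
  · refine absurd ⟨(t * b / (t * b + s * b')) • p + (s * b' / (t * b + s * b')) • q,
      convex_convexHull ℝ V hp hq (by positivity) (by positivity) (by field_simp),
      (t * b + s * b')⁻¹ • (t • k + s • k'),
      smul_mem K (inv_nonneg.2 hc.le) (add_mem (smul_mem K ht.le hk) (smul_mem K hs.le hk')),
      ?_⟩ hv
    have hcv : (t * b + s * b') • v = t • b • p + s • b' • q + (t • k + s • k') := by
      linear_combination (norm := module) -hvts + (t * hab + s * hab' + hts) • v
    rw [← inv_smul_smul₀ hc.ne' v, hcv]
    module

theorem convexHull_extremePoints_add_cone (hK : (K : ConvexCone ℝ M).Salient) (V : Finset M) :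
    convexHull ℝ ((convexHull ℝ ↑V + (K : Set M)).extremePoints ℝ) + (K : Set M) =
      convexHull ℝ (V : Set M) + (K : Set M) := by
  classical
  induction V using Finset.strongInduction with
  | H V ih =>
  refine Set.Subset.antisymm (Set.add_subset_add_right
    (convexHull_mono (extremePoints_convexHull_add_cone_subset _))) ?_
  by_cases hext : ∀ v ∈ V, v ∈ (convexHull ℝ ↑V + (K : Set M)).extremePoints ℝ
  · exact Set.add_subset_add_right (convexHull_mono hext)
  push Not at hext
  obtain ⟨v, hvV, hv⟩ := hext
  have hmem : v ∈ convexHull ℝ ↑(V.erase v) + (K : Set M) := by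
    by_contra h
    have := mem_extremePoints_convexHull_insert_add_cone hK h
    rw [← Finset.coe_insert, Finset.insert_erase hvV] at this
    exact hv this
  have hT := convexHull_insert_add_cone_eq hmem
  rw [← Finset.coe_insert, Finset.insert_erase hvV] at hT
  rw [hT]
  exact (ih _ (Finset.erase_ssubset hvV)).superset

lemma image_convexHull_add_hull_add_cone {N : Type*} [AddCommGroup N] [Module ℝ N]
    {K : PointedCone ℝ N} (f : M →ₗ[ℝ] N) (V W : Set M) (hW : ∀ w ∈ W, f w ∈ K) :
    f '' (convexHull ℝ V + (hull ℝ W : Set M)) + (K : Set N) = convexHull ℝ (f '' V) + K := by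
  have hsub : f '' (hull ℝ W : Set M) ⊆ K := by
    rintro _ ⟨w, hw, rfl⟩
    exact map_mem_of_mem_hull f hW hw
  rw [Set.image_add, f.image_convexHull, add_assoc]
  refine congrArg _ (Set.Subset.antisymm ?_ (Set.subset_add_right _ ⟨0, zero_mem _, map_zero f⟩))
  exact (Set.add_subset_add_right hsub).trans K.coe_add_self.subset

lemma le_of_mem_convexHull_of_forall_le {f : M → EReal}
    (hf : ∀ r : ℝ, Convex ℝ {y | (r : EReal) ≤ f y}) {s : Set M} {a : EReal}
    (ha : ∀ y ∈ s, a ≤ f y) {x : M} (hx : x ∈ convexHull ℝ s) : a ≤ f x :=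
  EReal.ge_of_forall_gt_iff_ge.1 fun r hr =>
    convexHull_min (fun y hy => hr.le.trans (ha y hy)) (hf r) hx

theorem exists_mem_extremePoints_isLeast (hK : (K : ConvexCone ℝ M).Salient) {B : Set M}
    (hB : B.Nonempty) {V : Finset M}
    (hBV : B + (K : Set M) = convexHull ℝ (V : Set M) + (K : Set M))
    {f : M → EReal} (hf : ∀ r : ℝ, Convex ℝ {y | (r : EReal) ≤ f y})
    (hmono : ∀ x ∈ B - K, ∀ y ∈ B - K, y - x ∈ K → f x ≤ f y) :
    ∃ v ∈ B, (∀ y ∈ B, f v ≤ f y) ∧ IsLeast (f '' (B + (K : Set M)).extremePoints ℝ) (f v) := by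
  set E := (B + (K : Set M)).extremePoints ℝ
  have hE : convexHull ℝ E + (K : Set M) = B + K := by
    simp only [E, hBV]
    exact convexHull_extremePoints_add_cone hK V
  have hB_sub : ∀ y ∈ B, y ∈ convexHull ℝ E + (K : Set M) := fun y hy =>
    hE ▸ ⟨y, hy, 0, zero_mem K, add_zero y⟩
  have hE_fin : E.Finite :=
    V.finite_toSet.subset (by simp only [E, hBV]; exact extremePoints_convexHull_add_cone_subset _)
  obtain ⟨y₀, hy₀⟩ := hB
  obtain ⟨z₀, hz₀, -⟩ := hB_sub y₀ hy₀
  obtain ⟨v, hvE, hvmin⟩ := Set.exists_min_image E f hE_fin (convexHull_nonempty_iff.1 ⟨z₀, hz₀⟩)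
  refine ⟨v, mem_of_mem_extremePoints_add_cone hvE, fun y hy => ?_,
    ⟨⟨v, hvE, rfl⟩, Set.forall_mem_image.2 hvmin⟩⟩
  obtain ⟨z, hz, k, hk, rfl⟩ := hB_sub y hy
  calc f v ≤ f z := le_of_mem_convexHull_of_forall_le hf hvmin hz
    _ ≤ f (z + k) := hmono z ⟨z + k, hy, k, hk, add_sub_cancel_right z k⟩ _
        ⟨z + k, hy, 0, zero_mem K, sub_zero _⟩ (by rwa [add_sub_cancel_left])

end UpperImage

/-- Under quasi-concavity of `f`, `C`-monotonicity of `f` on `P[S] − C`,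
`C`-boundedness of `P[S]` and `S ≠ ∅`, the problem `min f(Px) s.t. Ax ≥ b` has an optimal
solution `x*` with `f(Px*) = min {f(y) | y vertex of 𝒫}` where `𝒫 = P[S] + C`. -/
theorem stmt1 (q m n : ℕ)
    (A : Matrix (Fin m) (Fin n) ℝ) (P : Matrix (Fin q) (Fin n) ℝ) (b : Fin m → ℝ)
    (S : Set (Fin n → ℝ)) (hS : S = {x | b ≤ A.mulVec x}) (hSne : S.Nonempty)
    (PS : Set (Fin q → ℝ)) (hPS : PS = (fun x => P.mulVec x) '' S)
    (f : (Fin q → ℝ) → EReal)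
    (hf_qc : ∀ r : ℝ, Convex ℝ {y | (r : EReal) ≤ f y})
    (C : Set (Fin q → ℝ))
    (hC_poly : ∃ (p : ℕ) (Z : Matrix (Fin p) (Fin q) ℝ), C = {y | 0 ≤ Z.mulVec y})
    (hC_pointed : C ∩ (-C) = {0})
    (hmono : ∀ x ∈ PS - C, ∀ y ∈ PS - C, y - x ∈ C → f x ≤ f y)
    (hrec : {d | ∀ y ∈ PS, ∀ t : ℝ, 0 ≤ t → y + t • d ∈ PS} ⊆ C) :
    ∃ xstar ∈ S, (∀ x ∈ S, f (P.mulVec xstar) ≤ f (P.mulVec x)) ∧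
      IsLeast (f '' Set.extremePoints ℝ (PS + C)) (f (P.mulVec xstar)) := by
  obtain ⟨p, Z, rfl⟩ := hC_poly
  set K := (PointedCone.positive ℝ (Fin p → ℝ)).comap Z.mulVecLin
  have hK : (K : ConvexCone ℝ (Fin q → ℝ)).Salient :=
    (PointedCone.salient_iff_inter_neg_eq_singleton K).2 hC_pointed
  obtain ⟨V, W, hVW⟩ :=
    exists_eq_convexHull_add_hull (fun i => (LinearMap.proj i).comp A.mulVecLin) b
  replace hS : S = convexHull ℝ ↑V + (PointedCone.hull ℝ (W : Set (Fin n → ℝ)) : Set _) := by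
    rw [hS, ← hVW]
    ext x
    simp [Pi.le_def]
  have hW : ∀ w ∈ (W : Set (Fin n → ℝ)), P.mulVecLin w ∈ K := fun w hw => hrec fun y hy t ht => by
    rw [hPS] at hy ⊢
    obtain ⟨x, hx, rfl⟩ := hy
    refine ⟨x + t • w, hS ▸ add_smul_mem_add_hull (hS ▸ hx) hw ht, ?_⟩
    simp [Matrix.mulVec_add, Matrix.mulVec_smul]
  have hUpper : PS + (K : Set _) =
      convexHull ℝ ((V.image P.mulVecLin : Finset _) : Set _) + (K : Set _) := by
    rw [hPS, hS, Finset.coe_image]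
    exact image_convexHull_add_hull_add_cone P.mulVecLin _ _ hW
  obtain ⟨v, hv, hmin, hleast⟩ := exists_mem_extremePoints_isLeast hK
    (hPS ▸ hSne.image _) hUpper hf_qc hmono
  rw [hPS] at hv hmin
  obtain ⟨xstar, hxS, rfl⟩ := hv
  exact ⟨xstar, hxS, fun x hx => hmin _ (Set.mem_image_of_mem _ hx), hleast⟩
end

section
/- Let C ⊆ ℝ^q be a pointed convex cone, let 𝒫 ⊆ 𝒪 ⊆ ℝ^q be convex sets with C + 𝒪 ⊆ 𝒪 (in particular this holds when the recession cone of the polyhedron 𝒪 equals C), and let t be an extreme point (vertex) of 𝒪. If y ∈ 𝒫 satisfies t − y ∈ C, then y = t. -/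
open Pointwise

theorem eq_zero_of_mem_extremePoints_of_sub_mem_of_add_mem {𝕜 E : Type*} [Ring 𝕜]
    [LinearOrder 𝕜] [IsStrictOrderedRing 𝕜] [Invertible (2 : 𝕜)] [AddCommGroup E] [Module 𝕜 E]
    {A : Set E} {t d : E} (ht : t ∈ A.extremePoints 𝕜) (hsub : t - d ∈ A) (hadd : t + d ∈ A) :
    d = 0 :=
  sub_eq_self.mp (ht.2 hsub hadd (mem_openSegment_sub_add t d))

theorem stmt2_general (q : ℕ) (C UpperIm O : Set (Fin q → ℝ))
    (hsub : UpperIm ⊆ O)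
    (hCO : C + O ⊆ O)
    (t : Fin q → ℝ) (ht : t ∈ Set.extremePoints ℝ O)
    (y : Fin q → ℝ) (hy : y ∈ UpperIm) (hty : t - y ∈ C) : y = t := by
  have hy' : t - (t - y) ∈ O := by simpa using hsub hy
  have hreflect : t + (t - y) ∈ O := add_comm (t - y) t ▸ hCO (Set.add_mem_add hty ht.1)
  exact (sub_eq_zero.mp (eq_zero_of_mem_extremePoints_of_sub_mem_of_add_mem ht hy' hreflect)).symm

/-- Let `C` be a pointed convex cone, `UpperIm ⊆ O` convex sets with
`C + O ⊆ O`, and let `t` be an extreme point (vertex) of `O`.  If `y ∈ UpperIm` satisfies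
`t − y ∈ C`, then `y = t`. -/
theorem stmt2 (q : ℕ) (C UpperIm O : Set (Fin q → ℝ))
    (hC_convex : Convex ℝ C)
    (hC_cone : ∀ (t : ℝ), 0 ≤ t → ∀ c ∈ C, t • c ∈ C)
    (hC_pointed : C ∩ (-C) = {0})
    (hP : Convex ℝ UpperIm) (hO : Convex ℝ O) (hsub : UpperIm ⊆ O)
    (hCO : C + O ⊆ O)
    (t : Fin q → ℝ) (ht : t ∈ Set.extremePoints ℝ O)
    (y : Fin q → ℝ) (hy : y ∈ UpperIm) (hty : t - y ∈ C) : y = t :=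
  stmt2_general q C UpperIm O hsub hCO t ht y hy hty
end

section
/- Let S := {x ∈ ℝ^n | Ax ≥ b} be nonempty, let C = {y ∈ ℝ^q | Zᵀy ≥ 0} be a solid pointed polyhedral convex cone containing the recession cone of P[S], let c ∈ int C, and let t ∈ ℝ^q. Let (x̄, z̄) be an optimal solution of P2(t) and (ū, w̄) an optimal solution of D2(t). Then: (i) the half-space H := {y ∈ ℝ^q | w̄ᵀy ≥ bᵀū} contains the upper image 𝒫 := P[S] + C; (ii) the point s := t + z̄·c satisfies s ∈ 𝒫 and w̄ᵀs ≤ bᵀū (so s lies on the boundary of H and hence on the boundary of 𝒫); (iii) t ∉ 𝒫 if and only if z̄ > 0. -/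
/-!
(i) is weak duality: if `y = P x + d` with `A x ≥ b` and `d ∈ C`, then
`w̄ᵀy = ūᵀA x + w̄ᵀd ≥ bᵀū`, because `Yᵀw̄ ≥ 0` makes `w̄` nonnegative on `C = cone Y`.

(ii) rests on strong duality `z̄ ≤ bᵀū - tᵀw̄`. Homogenize `P₂(t)` with a variable `s ≥ 0`:
optimality of `z̄` says that `z - s z̄` is nonnegative on the homogenized feasible cone, so by the
Farkas–Minkowski lemma it is a nonnegative combination of the constraints. The coefficients give
`u ≥ 0` and `w = Z v` with `v ≥ 0`; such a `w` satisfies `Yᵀw ≥ 0` since the columns of `Y` lie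
in `C = {y | Zᵀy ≥ 0}`, so `(u, w)` is feasible for `D₂(t)` with value at least `z̄`.

(iii) holds because `t + z c ∈ 𝒫` exactly when `P₂(t)` has a feasible point of value `z`.
-/

open Matrix

section FarkasMinkowski

variable {𝕜 V ι : Type*} [Field 𝕜] [LinearOrder 𝕜] [IsStrictOrderedRing 𝕜]
  [AddCommGroup V] [Module 𝕜 V]

/-- **Farkas–Minkowski lemma**, by Bartl's induction on the number of constraints. -/
theorem exists_nonneg_eq_sum_of_forall_nonneg (s : Finset ι) (a : ι → Module.Dual 𝕜 V)
    (f : Module.Dual 𝕜 V) (h : ∀ x, (∀ i ∈ s, 0 ≤ a i x) → 0 ≤ f x) :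
    ∃ y : ι → 𝕜, 0 ≤ y ∧ f = ∑ i ∈ s, y i • a i := by
  classical
  induction s using Finset.induction_on generalizing a f with
  | empty =>
    refine ⟨0, le_rfl, LinearMap.ext fun x => ?_⟩
    have h₁ := h x (by simp)
    have h₂ := h (-x) (by simp)
    simp only [map_neg, Left.nonneg_neg_iff] at h₂
    simpa using le_antisymm h₂ h₁
  | insert j s hj ih =>
    have sum_update (y : ι → 𝕜) (r : 𝕜) :
        ∑ i ∈ s, Function.update y j r i • a i = ∑ i ∈ s, y i • a i :=
      Finset.sum_congr rfl fun i hi => by rw [Function.update_of_ne (ne_of_mem_of_not_mem hi hj)]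
    by_cases hs : ∀ x, (∀ i ∈ s, 0 ≤ a i x) → 0 ≤ f x
    · obtain ⟨y, hy, rfl⟩ := ih a f hs
      refine ⟨Function.update y j 0, le_update_iff.2 ⟨le_rfl, fun i _ => hy i⟩, ?_⟩
      rw [Finset.sum_insert hj, Function.update_self, zero_smul, zero_add, sum_update]
    push Not at hs
    obtain ⟨x₀, hx₀, hfx₀⟩ := hs
    have haj : a j x₀ < 0 := by
      by_contra! haj
      exact hfx₀.not_ge (h x₀ ((Finset.forall_mem_insert _ _ _).2 ⟨haj, hx₀⟩))
    -- the projection along `x₀` onto `ker (a j)`; composing with it removes the constraint `j`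
    let π : V →ₗ[𝕜] V := LinearMap.id - ((a j x₀)⁻¹ • a j).smulRight x₀
    have comp_π (g : Module.Dual 𝕜 V) : g ∘ₗ π = g - (g x₀ / a j x₀) • a j := by
      ext x
      simp only [LinearMap.coe_comp, Function.comp_apply, LinearMap.sub_apply, LinearMap.id_coe,
        id_eq, LinearMap.coe_smulRight, LinearMap.smul_apply, smul_eq_mul, map_sub, map_smul,
        sub_right_inj, π]
      ring
    obtain ⟨y, hy, hfy⟩ := ih (fun i => a i ∘ₗ π) (f ∘ₗ π) fun x hx => h (π x) <|
      (Finset.forall_mem_insert _ _ _).2 ⟨by simp [← LinearMap.comp_apply, comp_π, haj.ne], hx⟩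
    set g := f - ∑ i ∈ s, y i • a i with hg_def
    have hg : g = (g x₀ / a j x₀) • a j := by
      have hgπ : g ∘ₗ π = 0 := by
        rw [hg_def, LinearMap.sub_comp, hfy]
        ext x
        simp
      rwa [comp_π, sub_eq_zero] at hgπ
    have hgx₀ : g x₀ < 0 := by
      have : 0 ≤ ∑ i ∈ s, y i * a i x₀ :=
        Finset.sum_nonneg fun i hi => mul_nonneg (hy i) (hx₀ i hi)
      simp only [hg_def, LinearMap.sub_apply, LinearMap.sum_apply, LinearMap.smul_apply,
        smul_eq_mul]
      linarith
    refine ⟨Function.update y j (g x₀ / a j x₀),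
      le_update_iff.2 ⟨div_nonneg_of_nonpos hgx₀.le haj.le, fun i _ => hy i⟩, ?_⟩
    rw [Finset.sum_insert hj, Function.update_self, ← hg, sum_update, hg_def, sub_add_cancel]

end FarkasMinkowski

theorem transpose_mulVec_nonneg_iff {R m n : Type*} [CommRing R] [PartialOrder R]
    [IsOrderedRing R] [Fintype m] [Fintype n] {M : Matrix m n R} {w : m → R} :
    0 ≤ Mᵀ *ᵥ w ↔ ∀ l, 0 ≤ l → 0 ≤ w ⬝ᵥ M *ᵥ l := by
  classical
  have hwM (l : n → R) : w ⬝ᵥ M *ᵥ l = Mᵀ *ᵥ w ⬝ᵥ l := by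
    rw [dotProduct_comm (Mᵀ *ᵥ w), dotProduct_transpose_mulVec]
  simp_rw [hwM]
  refine ⟨fun h l hl => dotProduct_nonneg_of_nonneg h hl, fun h j => ?_⟩
  simpa using h (Pi.single j 1) (Pi.single_nonneg.2 zero_le_one)

theorem transpose_mulVec_mulVec_nonneg {R m n o : Type*} [CommRing R] [PartialOrder R]
    [IsOrderedRing R] [Fintype m] [Fintype n] [Fintype o] {Y : Matrix m o R} {Z : Matrix m n R}
    (hYZ : ∀ l, 0 ≤ l → 0 ≤ Zᵀ *ᵥ (Y *ᵥ l)) {v : n → R} (hv : 0 ≤ v) :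
    0 ≤ Yᵀ *ᵥ (Z *ᵥ v) :=
  transpose_mulVec_nonneg_iff.2 fun l hl =>
    dotProduct_comm (Y *ᵥ l) _ ▸ transpose_mulVec_nonneg_iff.1 (hYZ l hl) v hv

section LinearProgram

variable {m n p q : Type*} [Fintype n] [Fintype q]

def P2Feasible (A : Matrix m n ℝ) (b : m → ℝ) (P : Matrix q n ℝ) (Z : Matrix q p ℝ)
    (c t : q → ℝ) (x : n → ℝ) (z : ℝ) : Prop :=
  b ≤ A *ᵥ x ∧ Zᵀ *ᵥ (P *ᵥ x) ≤ Zᵀ *ᵥ t + z • Zᵀ *ᵥ c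

def upperImage (A : Matrix m n ℝ) (b : m → ℝ) (P : Matrix q n ℝ) (C : Set (q → ℝ)) :
    Set (q → ℝ) :=
  {y | ∃ x ∈ {x | b ≤ A *ᵥ x}, ∃ d ∈ C, y = P *ᵥ x + d}

variable {A : Matrix m n ℝ} {b : m → ℝ} {P : Matrix q n ℝ} {Z : Matrix q p ℝ} {c t : q → ℝ}

theorem P2Feasible.mono (hZc : 0 ≤ Zᵀ *ᵥ c) {x : n → ℝ} {z z' : ℝ}
    (h : P2Feasible A b P Z c t x z) (hz : z ≤ z') : P2Feasible A b P Z c t x z' :=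
  ⟨h.1, h.2.trans (by gcongr)⟩

theorem add_smul_mem_upperImage_iff {z : ℝ} :
    t + z • c ∈ upperImage A b P {y | 0 ≤ Zᵀ *ᵥ y} ↔ ∃ x, P2Feasible A b P Z c t x z := by
  constructor
  · rintro ⟨x, hx, d, hd, hy⟩
    refine ⟨x, hx, ?_⟩
    rw [eq_sub_of_add_eq' hy.symm] at hd
    change 0 ≤ Zᵀ *ᵥ (t + z • c - P *ᵥ x) at hd
    rw [mulVec_sub, sub_nonneg] at hd
    rwa [mulVec_add, mulVec_smul] at hd
  · rintro ⟨x, hx, hZ⟩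
    refine ⟨x, hx, t + z • c - P *ᵥ x, ?_, (add_sub_cancel _ _).symm⟩
    change 0 ≤ Zᵀ *ᵥ (t + z • c - P *ᵥ x)
    rwa [mulVec_sub, sub_nonneg, mulVec_add, mulVec_smul]

theorem mem_upperImage_iff_nonpos (hZc : 0 ≤ Zᵀ *ᵥ c) {xbar : n → ℝ} {zbar : ℝ}
    (hfeas : P2Feasible A b P Z c t xbar zbar)
    (hopt : ∀ x z, P2Feasible A b P Z c t x z → zbar ≤ z) :
    t ∈ upperImage A b P {y | 0 ≤ Zᵀ *ᵥ y} ↔ zbar ≤ 0 := by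
  simpa using (add_smul_mem_upperImage_iff (z := 0)).trans
    ⟨fun ⟨x, hx⟩ => hopt x 0 hx, fun h => ⟨xbar, hfeas.mono hZc h⟩⟩

theorem upperImage_subset_halfspace [Fintype m] {C : Set (q → ℝ)} {u : m → ℝ} {w : q → ℝ}
    (hAu : Aᵀ *ᵥ u = Pᵀ *ᵥ w) (hu : 0 ≤ u) (hwC : ∀ d ∈ C, 0 ≤ w ⬝ᵥ d) :
    upperImage A b P C ⊆ {y | b ⬝ᵥ u ≤ w ⬝ᵥ y} := by
  rintro _ ⟨x, hx, d, hd, rfl⟩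
  calc b ⬝ᵥ u = u ⬝ᵥ b := dotProduct_comm _ _
    _ ≤ u ⬝ᵥ A *ᵥ x := dotProduct_le_dotProduct_of_nonneg_left hx hu
    _ = w ⬝ᵥ P *ᵥ x := by rw [← dotProduct_transpose_mulVec, hAu, dotProduct_transpose_mulVec]
    _ ≤ w ⬝ᵥ (P *ᵥ x + d) := by rw [dotProduct_add]; linarith [hwC d hd]

theorem mul_le_of_homogenized_feasible {xbar : n → ℝ} {zbar : ℝ}
    (hfeas : P2Feasible A b P Z c t xbar zbar)
    (hopt : ∀ x z, P2Feasible A b P Z c t x z → zbar ≤ z)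
    {x : n → ℝ} {z s : ℝ} (hs : 0 ≤ s) (hA : s • b ≤ A *ᵥ x)
    (hZ : Zᵀ *ᵥ (P *ᵥ x) ≤ s • Zᵀ *ᵥ t + z • Zᵀ *ᵥ c) : zbar * s ≤ z := by
  rcases hs.eq_or_lt with rfl | hs
  · -- `(x, z)` is a recession direction of `P₂(t)`
    rw [zero_smul] at hA hZ
    rw [zero_add] at hZ
    have := hopt (xbar + x) (zbar + z)
      ⟨by simpa [mulVec_add] using add_le_add hfeas.1 hA,
        by simpa [mulVec_add, add_smul, add_assoc] using add_le_add hfeas.2 hZ⟩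
    linarith
  · have := hopt (s⁻¹ • x) (s⁻¹ * z)
      ⟨by simpa [mulVec_smul, inv_smul_smul₀ hs.ne'] using
          smul_le_smul_of_nonneg_left hA (inv_nonneg.2 hs.le),
        by simpa [mulVec_smul, smul_add, inv_smul_smul₀ hs.ne', smul_smul] using
          smul_le_smul_of_nonneg_left hZ (inv_nonneg.2 hs.le)⟩
    exact (le_inv_mul_iff₀' hs).1 this

theorem exists_homogenized_certificate [Fintype m] [Fintype p] {xbar : n → ℝ} {zbar : ℝ}
    (hfeas : P2Feasible A b P Z c t xbar zbar)
    (hopt : ∀ x z, P2Feasible A b P Z c t x z → zbar ≤ z) :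
    ∃ u v μ, 0 ≤ u ∧ 0 ≤ v ∧ 0 ≤ μ ∧ ∀ x z s, z - zbar * s =
      u ⬝ᵥ (A *ᵥ x - s • b) + v ⬝ᵥ (s • Zᵀ *ᵥ t + z • Zᵀ *ᵥ c - Zᵀ *ᵥ (P *ᵥ x)) + μ * s := by
  classical
  let xL := LinearMap.fst ℝ (n → ℝ) (ℝ × ℝ)
  let zL : Module.Dual ℝ ((n → ℝ) × ℝ × ℝ) := LinearMap.fst ℝ ℝ ℝ ∘ₗ LinearMap.snd ℝ _ _
  let sL : Module.Dual ℝ ((n → ℝ) × ℝ × ℝ) := LinearMap.snd ℝ ℝ ℝ ∘ₗ LinearMap.snd ℝ _ _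
  let F := A.mulVecLin ∘ₗ xL - sL.smulRight b
  let G := sL.smulRight (Zᵀ *ᵥ t) + zL.smulRight (Zᵀ *ᵥ c) - Zᵀ.mulVecLin ∘ₗ P.mulVecLin ∘ₗ xL
  let a : m ⊕ p ⊕ Unit → Module.Dual ℝ ((n → ℝ) × ℝ × ℝ) :=
    Sum.elim (fun i => LinearMap.proj i ∘ₗ F)
      (Sum.elim (fun k => LinearMap.proj k ∘ₗ G) fun _ => sL)
  have hcone : ∀ w, (∀ k ∈ Finset.univ, 0 ≤ a k w) → 0 ≤ (zL - zbar • sL) w := by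
    rintro ⟨x, z, s⟩ hw
    have hA : 0 ≤ A *ᵥ x - s • b := fun i => hw (.inl i) (Finset.mem_univ _)
    have hZ : 0 ≤ s • Zᵀ *ᵥ t + z • Zᵀ *ᵥ c - Zᵀ *ᵥ (P *ᵥ x) := fun k =>
      hw (.inr (.inl k)) (Finset.mem_univ _)
    exact sub_nonneg.2 <| mul_le_of_homogenized_feasible hfeas hopt
      (hw (.inr (.inr ())) (Finset.mem_univ _)) (sub_nonneg.1 hA) (sub_nonneg.1 hZ)
  obtain ⟨y, hy, hf⟩ := exists_nonneg_eq_sum_of_forall_nonneg Finset.univ a _ hcone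
  refine ⟨fun i => y (.inl i), fun k => y (.inr (.inl k)), y (.inr (.inr ())),
    fun i => hy _, fun k => hy _, hy _, fun x z s => ?_⟩
  have := LinearMap.congr_fun hf (x, z, s)
  rw [LinearMap.sum_apply, Fintype.sum_sum_type, Fintype.sum_sum_type] at this
  simp only [LinearMap.smul_apply, smul_eq_mul, Fintype.sum_unique, ← add_assoc] at this
  exact this

theorem exists_dual_ge_of_primal_optimal [Fintype m] [Fintype p] {xbar : n → ℝ} {zbar : ℝ}
    (hfeas : P2Feasible A b P Z c t xbar zbar)
    (hopt : ∀ x z, P2Feasible A b P Z c t x z → zbar ≤ z) :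
    ∃ u v, 0 ≤ u ∧ 0 ≤ v ∧ Aᵀ *ᵥ u = Pᵀ *ᵥ (Z *ᵥ v) ∧ c ⬝ᵥ Z *ᵥ v = 1 ∧
      zbar ≤ b ⬝ᵥ u - t ⬝ᵥ Z *ᵥ v := by
  obtain ⟨u, v, μ, hu, hv, hμ, hcert⟩ := exists_homogenized_certificate hfeas hopt
  refine ⟨u, v, hu, hv, dotProduct_eq _ _ fun x => ?_, ?_, ?_⟩
  · have := hcert x 0 0
    simp only [mul_zero, sub_self, zero_smul, sub_zero, add_zero, zero_sub, dotProduct_neg] at this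
    have e₁ : Aᵀ *ᵥ u ⬝ᵥ x = u ⬝ᵥ A *ᵥ x := by
      rw [dotProduct_comm, dotProduct_transpose_mulVec]
    have e₂ : Pᵀ *ᵥ Z *ᵥ v ⬝ᵥ x = v ⬝ᵥ Zᵀ *ᵥ P *ᵥ x := by
      rw [dotProduct_comm, dotProduct_transpose_mulVec, dotProduct_comm,
        ← dotProduct_transpose_mulVec]
    linarith
  · have := hcert 0 1 0
    simp only [mul_zero, sub_zero, mulVec_zero, zero_smul, sub_self, dotProduct_zero, one_smul,
      zero_add, add_zero] at this
    rw [← dotProduct_transpose_mulVec, this]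
  · have := hcert 0 0 1
    simp only [mul_one, zero_sub, mulVec_zero, one_smul, dotProduct_neg, zero_smul, add_zero,
      sub_zero] at this
    rw [← dotProduct_transpose_mulVec, dotProduct_comm b]
    linarith

end LinearProgram

theorem stmt4_general (q m n o p : ℕ)
    (A : Matrix (Fin m) (Fin n) ℝ) (P : Matrix (Fin q) (Fin n) ℝ) (b : Fin m → ℝ)
    (Y : Matrix (Fin q) (Fin o) ℝ) (Z : Matrix (Fin q) (Fin p) ℝ)
    (C : Set (Fin q → ℝ))
    (hCZ : C = {y | 0 ≤ Z.transpose.mulVec y})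
    (hCY : C = {y | ∃ l : Fin o → ℝ, 0 ≤ l ∧ y = Y.mulVec l})
    (c : Fin q → ℝ) (hc : c ∈ interior C)
    (S : Set (Fin n → ℝ)) (hS : S = {x | b ≤ A.mulVec x})
    (t : Fin q → ℝ)
    (UpperIm : Set (Fin q → ℝ))
    (hUpperIm : UpperIm = {y | ∃ x ∈ S, ∃ cc ∈ C, y = P.mulVec x + cc})
    (xbar : Fin n → ℝ) (zbar : ℝ)
    (hxz_feas : b ≤ A.mulVec xbar ∧
      Z.transpose.mulVec (P.mulVec xbar) ≤ Z.transpose.mulVec t + zbar • Z.transpose.mulVec c)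
    (hxz_opt : ∀ xz : (Fin n → ℝ) × ℝ,
      (b ≤ A.mulVec xz.1 ∧
        Z.transpose.mulVec (P.mulVec xz.1) ≤ Z.transpose.mulVec t + xz.2 • Z.transpose.mulVec c) →
      zbar ≤ xz.2)
    (ubar : Fin m → ℝ) (wbar : Fin q → ℝ)
    (huw_feas : A.transpose.mulVec ubar = P.transpose.mulVec wbar ∧ c ⬝ᵥ wbar = 1 ∧
      0 ≤ Y.transpose.mulVec wbar ∧ 0 ≤ ubar)
    (huw_opt : ∀ uw : (Fin m → ℝ) × (Fin q → ℝ),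
      (A.transpose.mulVec uw.1 = P.transpose.mulVec uw.2 ∧ c ⬝ᵥ uw.2 = 1 ∧
        0 ≤ Y.transpose.mulVec uw.2 ∧ 0 ≤ uw.1) →
      b ⬝ᵥ uw.1 - t ⬝ᵥ uw.2 ≤ b ⬝ᵥ ubar - t ⬝ᵥ wbar) :
    UpperIm ⊆ {y | b ⬝ᵥ ubar ≤ wbar ⬝ᵥ y} ∧
    ((t + zbar • c) ∈ UpperIm ∧ wbar ⬝ᵥ (t + zbar • c) ≤ b ⬝ᵥ ubar) ∧
    (t ∉ UpperIm ↔ 0 < zbar) := by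
  subst hS hUpperIm
  obtain ⟨hAu, hcw, hYw, hu⟩ := huw_feas
  have hopt : ∀ x z, P2Feasible A b P Z c t x z → zbar ≤ z := fun x z h => hxz_opt (x, z) h
  have hYZ : ∀ l, 0 ≤ l → 0 ≤ Zᵀ *ᵥ (Y *ᵥ l) := fun l hl => by
    have hYl : Y *ᵥ l ∈ C := hCY ▸ ⟨l, hl, rfl⟩
    rwa [hCZ] at hYl
  have hdual : zbar ≤ b ⬝ᵥ ubar - t ⬝ᵥ wbar := by
    obtain ⟨u, v, hu, hv, hAuv, hcv, hval⟩ := exists_dual_ge_of_primal_optimal hxz_feas hopt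
    exact hval.trans
      (huw_opt (u, Z *ᵥ v) ⟨hAuv, hcv, transpose_mulVec_mulVec_nonneg hYZ hv, hu⟩)
  have hwC : ∀ d ∈ C, 0 ≤ wbar ⬝ᵥ d := by
    rw [hCY]
    rintro _ ⟨l, hl, rfl⟩
    exact transpose_mulVec_nonneg_iff.1 hYw l hl
  have hZc : 0 ≤ Zᵀ *ᵥ c := by simpa [hCZ] using interior_subset hc
  subst hCZ
  refine ⟨upperImage_subset_halfspace hAu hu hwC,
    ⟨add_smul_mem_upperImage_iff.2 ⟨xbar, hxz_feas⟩, ?_⟩, ?_⟩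
  · rw [dotProduct_add, dotProduct_smul, dotProduct_comm wbar c, hcw, smul_eq_mul, mul_one,
      dotProduct_comm]
    linarith
  · rw [← not_le, not_iff_not]
    exact mem_upperImage_iff_nonpos hZc hxz_feas hopt

/-- With `S ≠ ∅`, `C = {y | Zᵀy ≥ 0} = {Yλ | λ ≥ 0}` solid pointed
polyhedral and `C`-bounding `P[S]`, `c ∈ int C`, `t ∈ ℝ^q`: if `(x̄, z̄)` is optimal for
`P₂(t)` and `(ū, w̄)` optimal for `D₂(t)`, then (i) `𝒫 := P[S] + C ⊆ H := {y | w̄ᵀy ≥ bᵀū}`,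
(ii) `s := t + z̄·c ∈ 𝒫` and `w̄ᵀs ≤ bᵀū`, and (iii) `t ∉ 𝒫 ↔ z̄ > 0`. -/
theorem stmt4 (q m n o p : ℕ)
    (A : Matrix (Fin m) (Fin n) ℝ) (P : Matrix (Fin q) (Fin n) ℝ) (b : Fin m → ℝ)
    (Y : Matrix (Fin q) (Fin o) ℝ) (Z : Matrix (Fin q) (Fin p) ℝ)
    (C : Set (Fin q → ℝ))
    (hCZ : C = {y | 0 ≤ Z.transpose.mulVec y})
    (hCY : C = {y | ∃ l : Fin o → ℝ, 0 ≤ l ∧ y = Y.mulVec l})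
    (hC_pointed : C ∩ (-C) = {0})
    (hC_solid : (interior C).Nonempty)
    (c : Fin q → ℝ) (hc : c ∈ interior C)
    (S : Set (Fin n → ℝ)) (hS : S = {x | b ≤ A.mulVec x}) (hSne : S.Nonempty)
    (hrec : {d | ∀ y ∈ (fun x => P.mulVec x) '' S, ∀ t : ℝ, 0 ≤ t →
        y + t • d ∈ (fun x => P.mulVec x) '' S} ⊆ C)
    (t : Fin q → ℝ)
    (UpperIm : Set (Fin q → ℝ))
    (hUpperIm : UpperIm = {y | ∃ x ∈ S, ∃ cc ∈ C, y = P.mulVec x + cc})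
    (xbar : Fin n → ℝ) (zbar : ℝ)
    (hxz_feas : b ≤ A.mulVec xbar ∧
      Z.transpose.mulVec (P.mulVec xbar) ≤ Z.transpose.mulVec t + zbar • Z.transpose.mulVec c)
    (hxz_opt : ∀ xz : (Fin n → ℝ) × ℝ,
      (b ≤ A.mulVec xz.1 ∧
        Z.transpose.mulVec (P.mulVec xz.1) ≤ Z.transpose.mulVec t + xz.2 • Z.transpose.mulVec c) →
      zbar ≤ xz.2)
    (ubar : Fin m → ℝ) (wbar : Fin q → ℝ)
    (huw_feas : A.transpose.mulVec ubar = P.transpose.mulVec wbar ∧ c ⬝ᵥ wbar = 1 ∧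
      0 ≤ Y.transpose.mulVec wbar ∧ 0 ≤ ubar)
    (huw_opt : ∀ uw : (Fin m → ℝ) × (Fin q → ℝ),
      (A.transpose.mulVec uw.1 = P.transpose.mulVec uw.2 ∧ c ⬝ᵥ uw.2 = 1 ∧
        0 ≤ Y.transpose.mulVec uw.2 ∧ 0 ≤ uw.1) →
      b ⬝ᵥ uw.1 - t ⬝ᵥ uw.2 ≤ b ⬝ᵥ ubar - t ⬝ᵥ wbar) :
    UpperIm ⊆ {y | b ⬝ᵥ ubar ≤ wbar ⬝ᵥ y} ∧
    ((t + zbar • c) ∈ UpperIm ∧ wbar ⬝ᵥ (t + zbar • c) ≤ b ⬝ᵥ ubar) ∧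
    (t ∉ UpperIm ↔ 0 < zbar) :=
  stmt4_general q m n o p A P b Y Z C hCZ hCY c hc S hS t UpperIm hUpperIm xbar zbar hxz_feas
    hxz_opt ubar wbar huw_feas huw_opt
end

section
/- (Weak duality for vector linear programs.) For every y ∈ 𝒫 and every y* ∈ 𝒟*, one has φ(y, y*) ≥ 0, where φ(y, y*) := Σ_{i=1}^{q−1} y_i y*_i + y_q (1 − Σ_{i=1}^{q−1} c_i y*_i) − y*_q. -/
open Matrix

/-! For `y = P x + Y l` in the upper image and `y* = (w₁, …, w_{q-1}, bᵀu - k)` in the lower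
image, the normalisation `cᵀw = 1` with `c_q = 1` turns the coefficient `1 - Σ cᵢ y*ᵢ` of `y_q`
into `w_q`, so that `φ(y, y*) = yᵀw - bᵀu + k`. Weak duality is then the chain
`bᵀu ≤ uᵀA x = wᵀP x ≤ wᵀP x + (Yᵀw)ᵀl = yᵀw`, which uses `u ≥ 0`, `Aᵀu = Pᵀw`, `Yᵀw ≥ 0`. -/

section WeakDuality

variable {R m n k o : Type*} [Fintype m] [Fintype n] [Fintype k] [Fintype o]

theorem Matrix.dotProduct_mulVec_eq_of_transpose_mulVec_eq [CommSemiring R]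
    {A : Matrix m n R} {P : Matrix k n R} {u : m → R} {w : k → R}
    (h : Aᵀ *ᵥ u = Pᵀ *ᵥ w) (x : n → R) : w ⬝ᵥ P *ᵥ x = u ⬝ᵥ A *ᵥ x := by
  rw [dotProduct_mulVec, dotProduct_mulVec, ← mulVec_transpose, ← mulVec_transpose, h]

theorem Matrix.dotProduct_le_of_primal_dual_feasible [CommSemiring R] [PartialOrder R]
    [IsOrderedRing R] {A : Matrix m n R} {P : Matrix k n R} {Y : Matrix k o R} {b : m → R}
    {x : n → R} {l : o → R} {u : m → R} {w : k → R}
    (hx : b ≤ A *ᵥ x) (hl : 0 ≤ l) (hu : 0 ≤ u) (hAu : Aᵀ *ᵥ u = Pᵀ *ᵥ w)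
    (hYw : 0 ≤ Yᵀ *ᵥ w) : b ⬝ᵥ u ≤ (P *ᵥ x + Y *ᵥ l) ⬝ᵥ w := by
  have hYl : 0 ≤ w ⬝ᵥ Y *ᵥ l := by
    rw [dotProduct_mulVec, ← mulVec_transpose]
    exact dotProduct_nonneg_of_nonneg hYw hl
  calc b ⬝ᵥ u = u ⬝ᵥ b := dotProduct_comm b u
    _ ≤ u ⬝ᵥ A *ᵥ x := dotProduct_le_dotProduct_of_nonneg_left hx hu
    _ = w ⬝ᵥ P *ᵥ x := (dotProduct_mulVec_eq_of_transpose_mulVec_eq hAu x).symm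
    _ ≤ w ⬝ᵥ P *ᵥ x + w ⬝ᵥ Y *ᵥ l := le_add_of_nonneg_right hYl
    _ = (P *ᵥ x + Y *ᵥ l) ⬝ᵥ w := by rw [← dotProduct_add, dotProduct_comm]

end WeakDuality

section Coupling

variable {R : Type*} [CommRing R] {q : ℕ}

/-- The paper's coupling function `φ`, with its last index moved to `Fin.last q`. -/
def vlpCoupling (c y ys : Fin (q + 1) → R) : R :=
  (∑ i : Fin q, y i.castSucc * ys i.castSucc) +
    y (Fin.last q) * (1 - ∑ i : Fin q, c i.castSucc * ys i.castSucc) - ys (Fin.last q)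

theorem vlpCoupling_update_sub_single {c w : Fin (q + 1) → R} (hcq : c (Fin.last q) = 1)
    (hcw : c ⬝ᵥ w = 1) (y : Fin (q + 1) → R) (β t : R) :
    vlpCoupling c y (Function.update w (Fin.last q) β - t • Pi.single (Fin.last q) 1) =
      y ⬝ᵥ w - β + t := by
  have hlast : 1 - ∑ i : Fin q, c i.castSucc * w i.castSucc = w (Fin.last q) := by
    rw [dotProduct, Fin.sum_univ_castSucc, hcq, one_mul] at hcw
    exact sub_eq_of_eq_add' hcw.symm
  simp only [vlpCoupling, dotProduct, Fin.sum_univ_castSucc, Pi.sub_apply, Pi.smul_apply,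
    smul_eq_mul, ne_eq, Fin.castSucc_ne_last, not_false_eq_true, Function.update_of_ne,
    Function.update_self, Pi.single_eq_of_ne, Pi.single_eq_same, mul_zero, mul_one, sub_zero, hlast]
  ring

end Coupling

theorem stmt5_general (q m n o : ℕ)
    (A : Matrix (Fin m) (Fin n) ℝ) (P : Matrix (Fin (q + 1)) (Fin n) ℝ) (b : Fin m → ℝ)
    (Y : Matrix (Fin (q + 1)) (Fin o) ℝ)
    (C : Set (Fin (q + 1) → ℝ))
    (hCY : C = {y | ∃ l : Fin o → ℝ, 0 ≤ l ∧ y = Y.mulVec l})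
    (c : Fin (q + 1) → ℝ) (hcq : c (Fin.last q) = 1)
    (S : Set (Fin n → ℝ)) (hS : S = {x | b ≤ A.mulVec x})
    (UpperIm : Set (Fin (q + 1) → ℝ))
    (hUpperIm : UpperIm = {y | ∃ x ∈ S, ∃ cc ∈ C, y = P.mulVec x + cc})
    (T : Set ((Fin m → ℝ) × (Fin (q + 1) → ℝ)))
    (hT : T = {uw | 0 ≤ uw.1 ∧ A.transpose.mulVec uw.1 = P.transpose.mulVec uw.2 ∧
      c ⬝ᵥ uw.2 = 1 ∧ 0 ≤ Y.transpose.mulVec uw.2})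
    (LowerIm : Set (Fin (q + 1) → ℝ))
    (hLowerIm : LowerIm = {ys | ∃ uw ∈ T, ∃ k : ℝ, 0 ≤ k ∧
      ys = Function.update uw.2 (Fin.last q) (b ⬝ᵥ uw.1) - k • (Pi.single (Fin.last q) 1 : Fin (q + 1) → ℝ)})
    (φ : (Fin (q + 1) → ℝ) → (Fin (q + 1) → ℝ) → ℝ)
    (hφ : ∀ y ys, φ y ys = (∑ i : Fin q, y i.castSucc * ys i.castSucc) +
      y (Fin.last q) * (1 - ∑ i : Fin q, c i.castSucc * ys i.castSucc) - ys (Fin.last q)) :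
    ∀ y ∈ UpperIm, ∀ ys ∈ LowerIm, 0 ≤ φ y ys := by
  rintro y hy ys hys
  subst hUpperIm hLowerIm hT hS hCY
  obtain ⟨x, hx, _, ⟨l, hl, rfl⟩, rfl⟩ := hy
  obtain ⟨⟨u, w⟩, ⟨hu, hAu, hcw, hYw⟩, k, hk, rfl⟩ := hys
  have hφ_eq : φ = vlpCoupling c := funext₂ hφ
  rw [hφ_eq, vlpCoupling_update_sub_single hcq hcw]
  linarith [dotProduct_le_of_primal_dual_feasible hx hl hu hAu hYw]

/-- **weak duality for VLP.**  Ambient space `ℝ^{q+1}` (the paper's `ℝ^q`,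
with the first `q` coordinates playing the role of indices `1, …, q−1` and `Fin.last q`
the role of index `q`).  For every `y` in the upper image and every `y*` in the lower
image, `φ(y, y*) ≥ 0`. -/
theorem stmt5 (q m n o p : ℕ)
    (A : Matrix (Fin m) (Fin n) ℝ) (P : Matrix (Fin (q + 1)) (Fin n) ℝ) (b : Fin m → ℝ)
    (Y : Matrix (Fin (q + 1)) (Fin o) ℝ) (Z : Matrix (Fin (q + 1)) (Fin p) ℝ)
    (C : Set (Fin (q + 1) → ℝ))
    (hCZ : C = {y | 0 ≤ Z.transpose.mulVec y})
    (hCY : C = {y | ∃ l : Fin o → ℝ, 0 ≤ l ∧ y = Y.mulVec l})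
    (hC_pointed : C ∩ (-C) = {0})
    (hC_solid : (interior C).Nonempty)
    (c : Fin (q + 1) → ℝ) (hc : c ∈ interior C) (hcq : c (Fin.last q) = 1)
    (S : Set (Fin n → ℝ)) (hS : S = {x | b ≤ A.mulVec x})
    (UpperIm : Set (Fin (q + 1) → ℝ))
    (hUpperIm : UpperIm = {y | ∃ x ∈ S, ∃ cc ∈ C, y = P.mulVec x + cc})
    (T : Set ((Fin m → ℝ) × (Fin (q + 1) → ℝ)))
    (hT : T = {uw | 0 ≤ uw.1 ∧ A.transpose.mulVec uw.1 = P.transpose.mulVec uw.2 ∧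
      c ⬝ᵥ uw.2 = 1 ∧ 0 ≤ Y.transpose.mulVec uw.2})
    (LowerIm : Set (Fin (q + 1) → ℝ))
    (hLowerIm : LowerIm = {ys | ∃ uw ∈ T, ∃ k : ℝ, 0 ≤ k ∧
      ys = Function.update uw.2 (Fin.last q) (b ⬝ᵥ uw.1) - k • (Pi.single (Fin.last q) 1 : Fin (q + 1) → ℝ)})
    (φ : (Fin (q + 1) → ℝ) → (Fin (q + 1) → ℝ) → ℝ)
    (hφ : ∀ y ys, φ y ys = (∑ i : Fin q, y i.castSucc * ys i.castSucc) +
      y (Fin.last q) * (1 - ∑ i : Fin q, c i.castSucc * ys i.castSucc) - ys (Fin.last q)) :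
    ∀ y ∈ UpperIm, ∀ ys ∈ LowerIm, 0 ≤ φ y ys :=
  stmt5_general q m n o A P b Y C hCY c hcq S hS UpperIm hUpperIm T hT LowerIm hLowerIm φ hφ
end

section
/- (Strong duality for vector linear programs.) Assume S ≠ ∅ and T ≠ ∅. Then: (i) if y ∈ ℝ^q satisfies φ(y, y*) ≥ 0 for all y* ∈ 𝒟*, then y ∈ 𝒫; (ii) if y* ∈ ℝ^q satisfies φ(y, y*) ≥ 0 for all y ∈ 𝒫, then y* ∈ 𝒟*. -/
/-!
Write `w(y*)` for `y*` with its last entry replaced by `1 - ∑_{i<q} cᵢ y*ᵢ`; then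
`φ(y, y*) = w(y*)ᵀ y - y*_q`, and `w(D*(u, w)) = w` on `T`.

(ii) If `φ(·, y*) ≥ 0` on `𝒫`, then `y*_q` is a lower bound of `y ↦ w(y*)ᵀ y` on `𝒫`. Moving
along recession directions in `C` shows `Yᵀ w(y*) ≥ 0`, and linear programming duality for
`min {w(y*)ᵀ P x | A x ≥ b}` yields `u ≥ 0` with `Aᵀ u = Pᵀ w(y*)` and `bᵀ u ≥ y*_q`; so
`y* = D*(u, w(y*)) - (bᵀ u - y*_q) e_q ∈ 𝒟*`.

(i) If `y ∉ 𝒫`, the system `A x ≥ b`, `Zᵀ (y - P x) ≥ 0` is infeasible, and Farkas' lemma gives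
`u, v ≥ 0` with `Aᵀ u = Pᵀ Z v` and `(Z v)ᵀ y < bᵀ u`. The vector `w = Z v` lies in the dual cone
of `C`, and it is nonzero because `S ≠ ∅`, so `cᵀ w > 0` as `c ∈ int C`. After scaling, `(u, w)`
lies in `T`, and `φ(y, D*(u, w)) = wᵀ y - bᵀ u < 0`.

Farkas' lemma itself is Hahn–Banach separation from a finitely generated cone, which is closed
by the conic Carathéodory theorem.
-/

open Matrix Function Filter Topology

section ConicCaratheodory

variable {ι E : Type*} [Fintype ι]

theorem exists_nonneg_sub_smul_apply_eq_zero {l g : ι → ℝ} (hl : 0 ≤ l) (hg : ∃ i, 0 < g i) :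
    ∃ t : ℝ, 0 ≤ l - t • g ∧ ∃ i, 0 < g i ∧ l i - t * g i = 0 := by
  classical
  obtain ⟨i, hi, hmin⟩ := Finset.exists_min_image {i | 0 < g i} (fun i ↦ l i / g i)
    (by simpa [Finset.Nonempty] using hg)
  simp only [Finset.mem_filter, Finset.mem_univ, true_and] at hi hmin
  refine ⟨l i / g i, fun j ↦ ?_, i, hi, by field_simp; ring⟩
  simp only [Pi.zero_apply, Pi.sub_apply, Pi.smul_apply, smul_eq_mul, sub_nonneg]
  rcases lt_or_ge 0 (g j) with hj | hj
  · exact (le_div_iff₀ hj).1 (hmin j hj)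
  · exact (mul_nonpos_of_nonneg_of_nonpos (div_nonneg (hl i) hi.le) hj).trans (hl j)

variable [AddCommGroup E] [Module ℝ E]

/-- Conic Carathéodory. -/
theorem exists_nonneg_eq_of_forall_support_subset (f : (ι → ℝ) →ₗ[ℝ] E) {l : ι → ℝ}
    (hl : 0 ≤ l) : ∃ l', 0 ≤ l' ∧ f l' = f l ∧
      ∀ g, support g ⊆ support l' → f g = 0 → g = 0 := by
  induction hN : (support l).ncard using Nat.strong_induction_on generalizing l with
  | _ N ih =>
  by_cases hinj : ∀ g, support g ⊆ support l → f g = 0 → g = 0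
  · exact ⟨l, hl, rfl, hinj⟩
  push Not at hinj
  obtain ⟨g, hgl, hfg, hg0⟩ := hinj
  obtain ⟨g, hgl, hfg, hpos⟩ : ∃ g, support g ⊆ support l ∧ f g = 0 ∧ ∃ i, 0 < g i := by
    obtain ⟨i, hi⟩ := Function.ne_iff.1 hg0
    rcases hi.lt_or_gt with hi | hi
    · exact ⟨-g, by simpa using hgl, by simp [hfg], i, by simpa using hi⟩
    · exact ⟨g, hgl, hfg, i, hi⟩
  obtain ⟨t, ht, i, hgi, hli⟩ := exists_nonneg_sub_smul_apply_eq_zero hl hpos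
  have hsub : support (l - t • g) ⊂ support l :=
    (Set.ssubset_iff_of_subset <| (support_sub _ _).trans <|
      Set.union_subset subset_rfl ((support_const_smul_subset t g).trans hgl)).2
      ⟨i, hgl hgi.ne', by simpa using hli⟩
  obtain ⟨l', hl', hfl', hinj⟩ := ih _ (hN ▸ Set.ncard_lt_ncard hsub) ht rfl
  exact ⟨l', hl', by simp [hfl', hfg], hinj⟩

end ConicCaratheodory

theorem isClosed_image_of_subset_submodule {V E : Type*} [AddCommGroup V] [Module ℝ V]
    [TopologicalSpace V] [IsTopologicalAddGroup V] [ContinuousSMul ℝ V] [T2Space V]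
    [FiniteDimensional ℝ V] [AddCommGroup E] [Module ℝ E] [TopologicalSpace E]
    [IsTopologicalAddGroup E] [ContinuousSMul ℝ E] [T2Space E]
    (f : V →ₗ[ℝ] E) (W : Submodule ℝ V) (hf : ∀ w ∈ W, f w = 0 → w = 0) {K : Set V}
    (hK : IsClosed K) (hKW : K ⊆ W) : IsClosed (f '' K) := by
  have hemb : Topology.IsClosedEmbedding (f ∘ₗ W.subtype) :=
    LinearMap.isClosedEmbedding_of_injective <| LinearMap.ker_eq_bot'.2 fun w hw ↦
      Subtype.ext (hf w w.2 hw)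
  convert hemb.isClosedMap _ (hK.preimage continuous_subtype_val)
  ext x
  constructor
  · rintro ⟨v, hv, rfl⟩
    exact ⟨⟨v, hKW hv⟩, hv, rfl⟩
  · rintro ⟨w, hw, rfl⟩
    exact ⟨w, hw, rfl⟩

theorem isClosed_image_nonneg {ι E : Type*} [Fintype ι] [AddCommGroup E] [Module ℝ E]
    [TopologicalSpace E] [IsTopologicalAddGroup E] [ContinuousSMul ℝ E] [T2Space E]
    (f : (ι → ℝ) →ₗ[ℝ] E) : IsClosed (f '' Set.Ici 0) := by
  let W (s : Set ι) : Submodule ℝ (ι → ℝ) := Submodule.pi sᶜ fun _ ↦ ⊥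
  have hW (s : Set ι) (g : ι → ℝ) : g ∈ W s ↔ support g ⊆ s := by
    rw [support_subset_iff']
    simp [W, Submodule.mem_pi]
  have hunion : f '' Set.Ici 0 =
      ⋃ s ∈ {s | ∀ g ∈ W s, f g = 0 → g = 0}, f '' (Set.Ici 0 ∩ W s) := by
    ext x
    simp only [Set.mem_image, Set.mem_iUnion, Set.mem_inter_iff, SetLike.mem_coe, hW]
    constructor
    · rintro ⟨l, hl, rfl⟩
      obtain ⟨l', hl', hfl, hinj⟩ := exists_nonneg_eq_of_forall_support_subset f hl
      exact ⟨support l', hinj, l', ⟨hl', subset_rfl⟩, hfl⟩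
    · rintro ⟨s, -, l, ⟨hl, -⟩, rfl⟩
      exact ⟨l, hl, rfl⟩
  rw [hunion]
  exact (Set.toFinite _).isClosed_biUnion fun s hs ↦ isClosed_image_of_subset_submodule f (W s) hs
    (isClosed_Ici.inter (W s).closed_of_finiteDimensional) Set.inter_subset_right

theorem nonneg_of_forall_le_add_mul {a β r : ℝ} (h : ∀ t : ℝ, 0 ≤ t → β ≤ a + t * r) :
    0 ≤ r := by
  by_contra! hr
  have := h ((a - β + 1) / -r) (div_nonneg (by linarith [h 0 le_rfl]) (neg_nonneg.2 hr.le))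
  rw [div_mul_eq_mul_div, div_neg, mul_div_assoc, div_self hr.ne] at this
  linarith

namespace Matrix

theorem le_mulVec_inv_smul {ι κ : Type*} [Fintype κ] {A : Matrix ι κ ℝ} {b : ι → ℝ} {x : κ → ℝ}
    {t : ℝ} (ht : 0 < t) (h : t • b ≤ A *ᵥ x) : b ≤ A *ᵥ t⁻¹ • x := by
  rwa [mulVec_smul, le_inv_smul_iff_of_pos ht]

variable {ι κ : Type*} [Fintype ι] [Fintype κ]

theorem nonneg_iff_forall_dotProduct_nonneg (v : ι → ℝ) : 0 ≤ v ↔ ∀ l, 0 ≤ l → 0 ≤ v ⬝ᵥ l := by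
  classical
  refine ⟨fun hv l hl ↦ dotProduct_nonneg_of_nonneg hv hl, fun h i ↦ ?_⟩
  simpa using h (Pi.single i 1) (Pi.single_nonneg.2 zero_le_one)

theorem nonneg_transpose_mulVec_iff (Y : Matrix κ ι ℝ) (w : κ → ℝ) :
    0 ≤ Yᵀ *ᵥ w ↔ ∀ l, 0 ≤ l → 0 ≤ w ⬝ᵥ Y *ᵥ l := by
  rw [nonneg_iff_forall_dotProduct_nonneg, mulVec_transpose]
  simp only [dotProduct_mulVec]

theorem dotProduct_le_transpose_mulVec_dotProduct {A : Matrix ι κ ℝ} {b : ι → ℝ} {u : ι → ℝ}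
    {x : κ → ℝ} (hu : 0 ≤ u) (hx : b ≤ A *ᵥ x) : b ⬝ᵥ u ≤ Aᵀ *ᵥ u ⬝ᵥ x := by
  rw [mulVec_transpose, ← dotProduct_mulVec, dotProduct_comm b]
  exact dotProduct_le_dotProduct_of_nonneg_left hx hu

/-- **Farkas' lemma.** -/
theorem exists_nonneg_transpose_mulVec_eq (M : Matrix ι κ ℝ) (d : κ → ℝ)
    (h : ∀ x, 0 ≤ M *ᵥ x → 0 ≤ d ⬝ᵥ x) : ∃ u, 0 ≤ u ∧ Mᵀ *ᵥ u = d := by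
  classical
  by_contra hd
  let K : ProperCone ℝ (κ → ℝ) :=
    ⟨(PointedCone.positive ℝ (ι → ℝ)).map Mᵀ.mulVecLin, by
      simpa [PointedCone.coe_map] using isClosed_image_nonneg Mᵀ.mulVecLin⟩
  have hK (z) : z ∈ K ↔ ∃ u, 0 ≤ u ∧ Mᵀ *ᵥ u = z := PointedCone.mem_map
  obtain ⟨φ, hφK, hφd⟩ := K.hyperplane_separation_point (x₀ := d) (by rwa [hK])
  have hφ (z : κ → ℝ) : φ z = z ⬝ᵥ fun j ↦ φ (Pi.single j 1) := by
    conv_lhs => rw [← Finset.univ_sum_single z]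
    rw [map_sum, dotProduct]
    refine Finset.sum_congr rfl fun j _ ↦ ?_
    rw [← smul_eq_mul, ← map_smul, ← Pi.single_smul, smul_eq_mul, mul_one]
  refine absurd (h _ fun i ↦ ?_) (by rw [← hφ]; exact hφd.not_ge)
  have := hφK _ ((hK _).2 ⟨Pi.single i 1, Pi.single_nonneg.2 zero_le_one, rfl⟩)
  rwa [hφ, mulVec_transpose, ← dotProduct_mulVec, single_one_dotProduct] at this

theorem exists_nonneg_transpose_mulVec_eq_and_le (A : Matrix ι κ ℝ) (b : ι → ℝ)
    (d : κ → ℝ) (β : ℝ) (h : ∀ x t, 0 ≤ t → t • b ≤ A *ᵥ x → t * β ≤ d ⬝ᵥ x) :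
    ∃ u, 0 ≤ u ∧ Aᵀ *ᵥ u = d ∧ β ≤ b ⬝ᵥ u := by
  -- Farkas' lemma for `[A, -b; 0, 1]`, whose rows encode `t • b ≤ A *ᵥ x` and `0 ≤ t`.
  obtain ⟨v, hv, hvd⟩ := exists_nonneg_transpose_mulVec_eq
    (fromBlocks A (replicateCol Unit (-b)) 0 (1 : Matrix Unit Unit ℝ))
    (Sum.elim d fun _ ↦ -β) fun xt hx ↦ by
      obtain ⟨x, t, rfl⟩ : ∃ x t, xt = Sum.elim x fun _ : Unit ↦ t :=
        ⟨xt ∘ Sum.inl, xt (Sum.inr ()), by ext (i | i) <;> rfl⟩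
      have hb : replicateCol Unit (-b) *ᵥ (fun _ ↦ t) = - t • b := by
        ext i; simp [mulVec, dotProduct, mul_comm]
      rw [fromBlocks_mulVec, ← Sum.elim_zero_zero, Sum.elim_le_elim_iff] at hx
      simp only [Sum.elim_comp_inl, Sum.elim_comp_inr, hb, zero_mulVec, one_mulVec, zero_add,
        neg_smul, ← sub_eq_add_neg, sub_nonneg] at hx
      have := h x t (hx.2 ()) hx.1
      rw [sumElim_dotProduct_sumElim, dotProduct_pUnit]
      linarith
  refine ⟨v ∘ Sum.inl, fun i ↦ hv _, ?_, ?_⟩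
  · ext j
    simpa [fromBlocks_transpose, fromBlocks_mulVec] using congrFun hvd (Sum.inl j)
  · have := congrFun hvd (Sum.inr ())
    simp only [fromBlocks_transpose, transpose_replicateCol, transpose_one, fromBlocks_mulVec,
      replicateRow_mulVec_eq_const, neg_dotProduct, one_mulVec, Sum.elim_inr, Pi.add_apply,
      const_apply, Function.comp_apply] at this
    linarith [show 0 ≤ v (Sum.inr ()) from hv _]

/-- **Linear programming duality**. -/
theorem exists_nonneg_transpose_mulVec_eq_of_forall_le {A : Matrix ι κ ℝ} {b : ι → ℝ}
    {d : κ → ℝ} {β : ℝ} {x₀ : κ → ℝ} (hx₀ : b ≤ A *ᵥ x₀) (h : ∀ x, b ≤ A *ᵥ x → β ≤ d ⬝ᵥ x) :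
    ∃ u, 0 ≤ u ∧ Aᵀ *ᵥ u = d ∧ β ≤ b ⬝ᵥ u := by
  refine exists_nonneg_transpose_mulVec_eq_and_le A b d β fun x t ht hx ↦ ?_
  rcases ht.eq_or_lt with rfl | ht
  · rw [zero_smul] at hx
    rw [zero_mul]
    refine nonneg_of_forall_le_add_mul (a := d ⬝ᵥ x₀) (β := β) fun s hs ↦ ?_
    have := h (x₀ + s • x) (by
      rw [mulVec_add, mulVec_smul]
      exact le_add_of_le_of_nonneg hx₀ (smul_nonneg hs hx))
    rwa [dotProduct_add, dotProduct_smul, smul_eq_mul] at this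
  · have := h _ (le_mulVec_inv_smul ht hx)
    rwa [dotProduct_smul, smul_eq_mul, le_inv_mul_iff₀ ht] at this

theorem exists_nonneg_transpose_mulVec_eq_zero {A : Matrix ι κ ℝ} {b : ι → ℝ}
    (h : ∀ x, ¬ b ≤ A *ᵥ x) : ∃ u, 0 ≤ u ∧ Aᵀ *ᵥ u = 0 ∧ 0 < b ⬝ᵥ u := by
  obtain ⟨u, hu, hAu, hbu⟩ := exists_nonneg_transpose_mulVec_eq_and_le A b 0 1
    fun x t ht hx ↦ by
      rw [mul_one, zero_dotProduct]
      exact not_lt.1 fun ht ↦ h _ (le_mulVec_inv_smul ht hx)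
  exact ⟨u, hu, hAu, one_pos.trans_le hbu⟩

end Matrix

section VectorLinearProgram

variable {ι ν κ σ τ : Type*} [Fintype ι] [Fintype ν] [Fintype κ] [Fintype σ] [Fintype τ]
  {A : Matrix ι ν ℝ} {P : Matrix κ ν ℝ} {b : ι → ℝ} {x₀ : ν → ℝ}

theorem dotProduct_pos_of_mem_interior {C : Set (κ → ℝ)} {c w : κ → ℝ} (hc : c ∈ interior C)
    (hw : ∀ z ∈ C, 0 ≤ w ⬝ᵥ z) (hw0 : w ≠ 0) : 0 < w ⬝ᵥ c := by
  have hcont : Tendsto (fun t : ℝ ↦ c - t • w) (𝓝[>] 0) (𝓝 c) :=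
    ((by fun_prop : Continuous fun t : ℝ ↦ c - t • w).tendsto' 0 c (by simp)).mono_left
      nhdsWithin_le_nhds
  obtain ⟨t, ht : 0 < t, htC⟩ := (eventually_mem_nhdsWithin.and
    (hcont.eventually (mem_interior_iff_mem_nhds.1 hc))).exists
  have hww : 0 < w ⬝ᵥ w := by simpa using dotProduct_self_star_pos_iff.2 hw0
  have := hw _ htC
  rw [dotProduct_sub, dotProduct_smul, smul_eq_mul] at this
  nlinarith

theorem exists_certificate_of_forall_not_nonneg (Z : Matrix κ τ ℝ) (y : κ → ℝ)
    (h : ∀ x, b ≤ A *ᵥ x → ¬ 0 ≤ Zᵀ *ᵥ (y - P *ᵥ x)) :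
    ∃ u v, 0 ≤ u ∧ 0 ≤ v ∧ Aᵀ *ᵥ u = Pᵀ *ᵥ (Z *ᵥ v) ∧ Z *ᵥ v ⬝ᵥ y < b ⬝ᵥ u := by
  obtain ⟨uv, huv, hA, hb⟩ := exists_nonneg_transpose_mulVec_eq_zero
    (A := fromRows A (-(Zᵀ * P))) (b := Sum.elim b (-(Zᵀ *ᵥ y))) fun x hx ↦ by
      rw [fromRows_mulVec, Sum.elim_le_elim_iff] at hx
      refine h x hx.1 ?_
      rw [mulVec_sub, sub_nonneg, mulVec_mulVec]
      simpa [neg_mulVec] using hx.2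
  refine ⟨uv ∘ Sum.inl, uv ∘ Sum.inr, fun i ↦ huv _, fun i ↦ huv _, ?_, ?_⟩
  · rw [transpose_fromRows, fromCols_mulVec] at hA
    simpa [transpose_mul, mulVec_mulVec, neg_mulVec] using eq_neg_of_add_eq_zero_left hA
  · rw [← Sum.elim_comp_inl_inr uv, sumElim_dotProduct_sumElim, neg_dotProduct, mulVec_transpose,
      ← dotProduct_mulVec, dotProduct_comm y] at hb
    linarith

theorem exists_primal_of_forall_dualFeasible_le {C : Set (κ → ℝ)} (Z : Matrix κ τ ℝ)
    (Y : Matrix κ σ ℝ) {c y : κ → ℝ} (hx₀ : b ≤ A *ᵥ x₀) (hCZ : C = {z | 0 ≤ Zᵀ *ᵥ z})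
    (hCY : C = {z | ∃ l, 0 ≤ l ∧ z = Y *ᵥ l}) (hc : c ∈ interior C)
    (h : ∀ u w, 0 ≤ u → Aᵀ *ᵥ u = Pᵀ *ᵥ w → c ⬝ᵥ w = 1 → 0 ≤ Yᵀ *ᵥ w → b ⬝ᵥ u ≤ w ⬝ᵥ y) :
    ∃ x, b ≤ A *ᵥ x ∧ y - P *ᵥ x ∈ C := by
  by_contra! hy
  obtain ⟨u, v, hu, hv, hAP, hlt⟩ := exists_certificate_of_forall_not_nonneg Z y
    fun x hx hZ ↦ hy x hx (hCZ ▸ hZ)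
  set w := Z *ᵥ v
  have hwC : ∀ z ∈ C, 0 ≤ w ⬝ᵥ z := fun z hz ↦ by
    rw [hCZ] at hz
    rw [dotProduct_comm, dotProduct_mulVec, ← mulVec_transpose]
    exact dotProduct_nonneg_of_nonneg hz hv
  have hYw : 0 ≤ Yᵀ *ᵥ w :=
    (nonneg_transpose_mulVec_iff Y w).2 fun l hl ↦ hwC _ (hCY ▸ ⟨l, hl, rfl⟩)
  have hw0 : w ≠ 0 := fun hw ↦ by
    have := dotProduct_le_transpose_mulVec_dotProduct hu hx₀
    rw [hAP, hw, mulVec_zero, zero_dotProduct] at this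
    rw [hw, zero_dotProduct] at hlt
    linarith
  have hcw : 0 < c ⬝ᵥ w := dotProduct_comm w c ▸ dotProduct_pos_of_mem_interior hc hwC hw0
  have := h ((c ⬝ᵥ w)⁻¹ • u) ((c ⬝ᵥ w)⁻¹ • w) (smul_nonneg (inv_nonneg.2 hcw.le) hu)
    (by rw [mulVec_smul, mulVec_smul, hAP])
    (by rw [dotProduct_smul, smul_eq_mul, inv_mul_cancel₀ hcw.ne'])
    (by rw [mulVec_smul]; exact smul_nonneg (inv_nonneg.2 hcw.le) hYw)
  rw [dotProduct_smul, smul_dotProduct, smul_eq_mul, smul_eq_mul] at this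
  exact hlt.not_ge (le_of_mul_le_mul_left this (inv_pos.2 hcw))

theorem exists_dualFeasible_of_forall_le (Y : Matrix κ σ ℝ) {w : κ → ℝ} {β : ℝ}
    (hx₀ : b ≤ A *ᵥ x₀) (h : ∀ x, b ≤ A *ᵥ x → ∀ l, 0 ≤ l → β ≤ w ⬝ᵥ (P *ᵥ x + Y *ᵥ l)) :
    ∃ u, 0 ≤ u ∧ Aᵀ *ᵥ u = Pᵀ *ᵥ w ∧ β ≤ b ⬝ᵥ u ∧ 0 ≤ Yᵀ *ᵥ w := by
  obtain ⟨u, hu, hA, hβ⟩ := exists_nonneg_transpose_mulVec_eq_of_forall_le (d := Pᵀ *ᵥ w) hx₀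
    fun x hx ↦ by simpa [dotProduct_mulVec, mulVec_transpose] using h x hx 0 le_rfl
  refine ⟨u, hu, hA, hβ, (nonneg_transpose_mulVec_iff Y w).2 fun l hl ↦ ?_⟩
  refine nonneg_of_forall_le_add_mul (a := w ⬝ᵥ P *ᵥ x₀) (β := β) fun t ht ↦ ?_
  simpa [mulVec_smul, dotProduct_add] using h x₀ hx₀ (t • l) (smul_nonneg ht hl)

end VectorLinearProgram

section Coupling

variable {q : ℕ}

def dualWeight (c ys : Fin (q + 1) → ℝ) : Fin (q + 1) → ℝ :=
  update ys (Fin.last q) (1 - ∑ i : Fin q, c i.castSucc * ys i.castSucc)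

theorem coupling_eq (c y ys : Fin (q + 1) → ℝ) :
    (∑ i : Fin q, y i.castSucc * ys i.castSucc) +
      y (Fin.last q) * (1 - ∑ i : Fin q, c i.castSucc * ys i.castSucc) - ys (Fin.last q) =
    dualWeight c ys ⬝ᵥ y - ys (Fin.last q) := by
  simp [dualWeight, dotProduct, Fin.sum_univ_castSucc, mul_comm]

theorem dotProduct_dualWeight {c : Fin (q + 1) → ℝ} (hcq : c (Fin.last q) = 1)
    (ys : Fin (q + 1) → ℝ) : c ⬝ᵥ dualWeight c ys = 1 := by
  simp [dualWeight, dotProduct, Fin.sum_univ_castSucc, hcq]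

theorem dualWeight_update {c w : Fin (q + 1) → ℝ} (hcq : c (Fin.last q) = 1) (hcw : c ⬝ᵥ w = 1)
    (a : ℝ) : dualWeight c (update w (Fin.last q) a) = w := by
  have hw : w (Fin.last q) = 1 - ∑ i : Fin q, c i.castSucc * w i.castSucc := by
    rw [dotProduct, Fin.sum_univ_castSucc, hcq] at hcw
    linarith
  simp [dualWeight, ← hw, (Fin.castSucc_lt_last _).ne]

theorem update_dualWeight (c ys : Fin (q + 1) → ℝ) :
    update (dualWeight c ys) (Fin.last q) (ys (Fin.last q)) = ys := by
  simp [dualWeight]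

end Coupling

theorem update_sub_smul_single {α : Type*} [DecidableEq α] (w : α → ℝ) (i : α) (a k : ℝ) :
    update w i a - k • Pi.single i 1 = update w i (a - k) := by
  ext j
  rcases eq_or_ne j i with rfl | h <;> simp [*]

theorem stmt6_general (q m n o p : ℕ)
    (A : Matrix (Fin m) (Fin n) ℝ) (P : Matrix (Fin (q + 1)) (Fin n) ℝ) (b : Fin m → ℝ)
    (Y : Matrix (Fin (q + 1)) (Fin o) ℝ) (Z : Matrix (Fin (q + 1)) (Fin p) ℝ)
    (C : Set (Fin (q + 1) → ℝ))
    (hCZ : C = {y | 0 ≤ Z.transpose.mulVec y})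
    (hCY : C = {y | ∃ l : Fin o → ℝ, 0 ≤ l ∧ y = Y.mulVec l})
    (c : Fin (q + 1) → ℝ) (hc : c ∈ interior C) (hcq : c (Fin.last q) = 1)
    (S : Set (Fin n → ℝ)) (hS : S = {x | b ≤ A.mulVec x}) (hSne : S.Nonempty)
    (UpperIm : Set (Fin (q + 1) → ℝ))
    (hUpperIm : UpperIm = {y | ∃ x ∈ S, ∃ cc ∈ C, y = P.mulVec x + cc})
    (T : Set ((Fin m → ℝ) × (Fin (q + 1) → ℝ)))
    (hT : T = {uw | 0 ≤ uw.1 ∧ A.transpose.mulVec uw.1 = P.transpose.mulVec uw.2 ∧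
      c ⬝ᵥ uw.2 = 1 ∧ 0 ≤ Y.transpose.mulVec uw.2})
    (LowerIm : Set (Fin (q + 1) → ℝ))
    (hLowerIm : LowerIm = {ys | ∃ uw ∈ T, ∃ k : ℝ, 0 ≤ k ∧
      ys = Function.update uw.2 (Fin.last q) (b ⬝ᵥ uw.1) - k • (Pi.single (Fin.last q) 1 : Fin (q + 1) → ℝ)})
    (φ : (Fin (q + 1) → ℝ) → (Fin (q + 1) → ℝ) → ℝ)
    (hφ : ∀ y ys, φ y ys = (∑ i : Fin q, y i.castSucc * ys i.castSucc) +
      y (Fin.last q) * (1 - ∑ i : Fin q, c i.castSucc * ys i.castSucc) - ys (Fin.last q)) :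
    (∀ y : Fin (q + 1) → ℝ, (∀ ys ∈ LowerIm, 0 ≤ φ y ys) → y ∈ UpperIm) ∧
    (∀ ys : Fin (q + 1) → ℝ, (∀ y ∈ UpperIm, 0 ≤ φ y ys) → ys ∈ LowerIm) := by
  subst hS hUpperIm hT hLowerIm
  obtain ⟨x₀, hx₀⟩ := hSne
  have hφw (y ys) : φ y ys = dualWeight c ys ⬝ᵥ y - ys (Fin.last q) :=
    (hφ y ys).trans (coupling_eq c y ys)
  refine ⟨fun y hy ↦ ?_, fun ys hys ↦ ?_⟩
  · obtain ⟨x, hx, hxC⟩ := exists_primal_of_forall_dualFeasible_le Z Y (y := y) hx₀ hCZ hCY hc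
      fun u w hu hA hcw hY ↦ by
        have := hy (update w (Fin.last q) (b ⬝ᵥ u)) ⟨(u, w), ⟨hu, hA, hcw, hY⟩, 0, le_rfl, by simp⟩
        rwa [hφw, dualWeight_update hcq hcw, update_self, sub_nonneg] at this
    exact ⟨x, hx, _, hxC, by abel⟩
  · obtain ⟨u, hu, hA, hβ, hY⟩ := exists_dualFeasible_of_forall_le (P := P) Y hx₀ fun x hx l hl ↦ by
      simpa [hφw] using hys _ ⟨x, hx, Y *ᵥ l, hCY ▸ ⟨l, hl, rfl⟩, rfl⟩
    refine ⟨(u, dualWeight c ys), ⟨hu, hA, dotProduct_dualWeight hcq ys, hY⟩,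
      b ⬝ᵥ u - ys (Fin.last q), sub_nonneg.2 hβ, ?_⟩
    rw [update_sub_smul_single, sub_sub_cancel, update_dualWeight]

/-- **strong duality for VLP.**  Ambient space `ℝ^{q+1}` (the paper's `ℝ^q`).
If `S ≠ ∅` and `T ≠ ∅`, then (i) any `y` with `φ(y, y*) ≥ 0` for all `y*` in the lower image
lies in the upper image, and (ii) any `y*` with `φ(y, y*) ≥ 0` for all `y` in the upper image
lies in the lower image. -/
theorem stmt6 (q m n o p : ℕ)
    (A : Matrix (Fin m) (Fin n) ℝ) (P : Matrix (Fin (q + 1)) (Fin n) ℝ) (b : Fin m → ℝ)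
    (Y : Matrix (Fin (q + 1)) (Fin o) ℝ) (Z : Matrix (Fin (q + 1)) (Fin p) ℝ)
    (C : Set (Fin (q + 1) → ℝ))
    (hCZ : C = {y | 0 ≤ Z.transpose.mulVec y})
    (hCY : C = {y | ∃ l : Fin o → ℝ, 0 ≤ l ∧ y = Y.mulVec l})
    (hC_pointed : C ∩ (-C) = {0})
    (hC_solid : (interior C).Nonempty)
    (c : Fin (q + 1) → ℝ) (hc : c ∈ interior C) (hcq : c (Fin.last q) = 1)
    (S : Set (Fin n → ℝ)) (hS : S = {x | b ≤ A.mulVec x}) (hSne : S.Nonempty)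
    (UpperIm : Set (Fin (q + 1) → ℝ))
    (hUpperIm : UpperIm = {y | ∃ x ∈ S, ∃ cc ∈ C, y = P.mulVec x + cc})
    (T : Set ((Fin m → ℝ) × (Fin (q + 1) → ℝ)))
    (hT : T = {uw | 0 ≤ uw.1 ∧ A.transpose.mulVec uw.1 = P.transpose.mulVec uw.2 ∧
      c ⬝ᵥ uw.2 = 1 ∧ 0 ≤ Y.transpose.mulVec uw.2})
    (hTne : T.Nonempty)
    (LowerIm : Set (Fin (q + 1) → ℝ))
    (hLowerIm : LowerIm = {ys | ∃ uw ∈ T, ∃ k : ℝ, 0 ≤ k ∧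
      ys = Function.update uw.2 (Fin.last q) (b ⬝ᵥ uw.1) - k • (Pi.single (Fin.last q) 1 : Fin (q + 1) → ℝ)})
    (φ : (Fin (q + 1) → ℝ) → (Fin (q + 1) → ℝ) → ℝ)
    (hφ : ∀ y ys, φ y ys = (∑ i : Fin q, y i.castSucc * ys i.castSucc) +
      y (Fin.last q) * (1 - ∑ i : Fin q, c i.castSucc * ys i.castSucc) - ys (Fin.last q)) :
    (∀ y : Fin (q + 1) → ℝ, (∀ ys ∈ LowerIm, 0 ≤ φ y ys) → y ∈ UpperIm) ∧
    (∀ ys : Fin (q + 1) → ℝ, (∀ y ∈ UpperIm, 0 ≤ φ y ys) → ys ∈ LowerIm) :=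
  stmt6_general q m n o p A P b Y Z C hCZ hCY c hc hcq S hS hSne UpperIm hUpperIm T hT LowerIm
    hLowerIm φ hφ
end

section
/- Let C ⊆ ℝ^q be a pointed polyhedral convex cone with C ≠ {0}, let 𝒫 := P[S] + C ≠ ∅, and let ℳ := {(z, ζ) ∈ ℝ^q × ℝ | ∃ y ∈ 𝒫 : z ≥ y and ζ ≥ −eᵀy} be the upper image of the lifted problem VLP'. Then for every nonzero c ∈ C, the vector c̄ := (c, −eᵀc) ∈ ℝ^{q+1} is a recession direction of ℳ (i.e., z̄ + λc̄ ∈ ℳ for all z̄ ∈ ℳ and λ ≥ 0) and c̄ ∉ ℝ^{q+1}₊. In particular, the recession cone of ℳ is not contained in ℝ^{q+1}₊, i.e., VLP' is unbounded. -/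
/-!
Adding `l • c` with `c ∈ C` to a point of `𝒫` stays in `𝒫`, and lifts to adding `l • c̄` in `ℳ`,
since `-eᵀ` is linear. The direction `c̄` is not in the nonnegative orthant: `c ≥ 0` and
`-eᵀc ≥ 0` force `eᵀc = 0`, hence `c = 0`.
-/

open Matrix

variable {ι κ : Type*} [Fintype ι]

/-- The upper image `ℳ` of the lifted problem VLP' built from an upper image `𝒫 = U`. -/
def liftedUpperImage (U : Set (ι → ℝ)) : Set ((ι → ℝ) × ℝ) :=
  {zζ | ∃ y ∈ U, y ≤ zζ.1 ∧ -(∑ i, y i) ≤ zζ.2}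

lemma polyhedralCone_add_smul_mem [Fintype κ] {Z : Matrix κ ι ℝ} {y c : ι → ℝ}
    (hy : 0 ≤ Z *ᵥ y) (hc : 0 ≤ Z *ᵥ c) {l : ℝ} (hl : 0 ≤ l) : 0 ≤ Z *ᵥ (y + l • c) := by
  rw [mulVec_add, mulVec_smul]
  exact add_nonneg hy (smul_nonneg hl hc)

lemma liftedUpperImage_add_smul_mem {U : Set (ι → ℝ)} {c : ι → ℝ} {l : ℝ}
    (hU : ∀ y ∈ U, y + l • c ∈ U) {z : (ι → ℝ) × ℝ} (hz : z ∈ liftedUpperImage U) :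
    z + l • (c, -(∑ i, c i)) ∈ liftedUpperImage U := by
  obtain ⟨y, hyU, hy₁, hy₂⟩ := hz
  refine ⟨y + l • c, hU y hyU, add_le_add_left hy₁ _, ?_⟩
  simp only [Pi.add_apply, Pi.smul_apply, smul_eq_mul, Finset.sum_add_distrib, ← Finset.mul_sum,
    Prod.snd_add, Prod.smul_snd]
  linarith

lemma not_nonneg_lift_of_ne_zero {c : ι → ℝ} (hc : c ≠ 0) :
    ¬(0 ≤ c ∧ (0 : ℝ) ≤ -(∑ i, c i)) := by
  rintro ⟨hc_nonneg, hsum_nonpos⟩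
  have hsum : ∑ i, c i = 0 := le_antisymm (by linarith) (Finset.sum_nonneg fun i _ => hc_nonneg i)
  exact hc (funext fun i =>
    (Finset.sum_eq_zero_iff_of_nonneg fun j _ => hc_nonneg j).mp hsum i (Finset.mem_univ i))

lemma exists_ne_zero_of_zero_mem_of_ne_singleton {α : Type*} [Zero α] {s : Set α}
    (h₀ : (0 : α) ∈ s) (hs : s ≠ {0}) : ∃ c ∈ s, c ≠ 0 := by
  by_contra! h
  exact hs (Set.eq_singleton_iff_unique_mem.mpr ⟨h₀, h⟩)

theorem stmt9_general (q n : ℕ)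
    (P : Matrix (Fin q) (Fin n) ℝ)
    (S : Set (Fin n → ℝ))
    (C : Set (Fin q → ℝ))
    (hC_poly : ∃ (p : ℕ) (Z : Matrix (Fin p) (Fin q) ℝ), C = {y | 0 ≤ Z.mulVec y})
    (hC_ne : C ≠ {0})
    (UpperIm : Set (Fin q → ℝ))
    (hUpperIm : UpperIm = {y | ∃ x ∈ S, ∃ cc ∈ C, y = P.mulVec x + cc})
    (M : Set ((Fin q → ℝ) × ℝ))
    (hM : M = {zζ | ∃ y ∈ UpperIm, y ≤ zζ.1 ∧ -(∑ i, y i) ≤ zζ.2}) :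
    (∀ c ∈ C, c ≠ 0 →
      (∀ zbar ∈ M, ∀ l : ℝ, 0 ≤ l → zbar + l • (c, -(∑ i, c i)) ∈ M) ∧
      ¬((0 : Fin q → ℝ) ≤ c ∧ (0 : ℝ) ≤ -(∑ i, c i))) ∧
    ¬({d : (Fin q → ℝ) × ℝ | ∀ zbar ∈ M, ∀ l : ℝ, 0 ≤ l → zbar + l • d ∈ M} ⊆
        {d | 0 ≤ d.1 ∧ 0 ≤ d.2}) := by
  obtain ⟨p, Z, rfl⟩ := hC_poly
  have hM_lift : M = liftedUpperImage UpperIm := hM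
  have hrec : ∀ c ∈ {y | 0 ≤ Z *ᵥ y}, c ≠ 0 →
      (∀ zbar ∈ M, ∀ l : ℝ, 0 ≤ l → zbar + l • (c, -(∑ i, c i)) ∈ M) ∧
      ¬(0 ≤ c ∧ (0 : ℝ) ≤ -(∑ i, c i)) := by
    refine fun c hc hc_ne => ⟨fun zbar hz l hl => ?_, not_nonneg_lift_of_ne_zero hc_ne⟩
    rw [hM_lift] at hz ⊢
    refine liftedUpperImage_add_smul_mem (fun y hy => ?_) hz
    rw [hUpperIm] at hy ⊢
    obtain ⟨x, hx, cc, hcc, rfl⟩ := hy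
    exact ⟨x, hx, cc + l • c, polyhedralCone_add_smul_mem hcc hc hl, add_assoc _ _ _⟩
  refine ⟨hrec, fun hsub => ?_⟩
  obtain ⟨c, hc, hc_ne⟩ := exists_ne_zero_of_zero_mem_of_ne_singleton
    (by simp : (0 : Fin q → ℝ) ∈ {y | 0 ≤ Z *ᵥ y}) hC_ne
  exact (hrec c hc hc_ne).2 (hsub (hrec c hc hc_ne).1)

/-- Let `C ≠ {0}` be a pointed polyhedral convex cone and suppose the
upper image `𝒫 = P[S] + C` is nonempty.  For the lifted upper image
`ℳ = {(z, ζ) | ∃ y ∈ 𝒫, y ≤ z ∧ −eᵀy ≤ ζ} ⊆ ℝ^q × ℝ`, every nonzero `c ∈ C` yields a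
recession direction `c̄ = (c, −eᵀc)` of `ℳ` not lying in the nonnegative orthant; in
particular, the recession cone of `ℳ` is not contained in the nonnegative orthant
(VLP' is unbounded). -/
theorem stmt9 (q m n : ℕ)
    (A : Matrix (Fin m) (Fin n) ℝ) (P : Matrix (Fin q) (Fin n) ℝ) (b : Fin m → ℝ)
    (S : Set (Fin n → ℝ)) (hS : S = {x | b ≤ A.mulVec x})
    (C : Set (Fin q → ℝ))
    (hC_poly : ∃ (p : ℕ) (Z : Matrix (Fin p) (Fin q) ℝ), C = {y | 0 ≤ Z.mulVec y})
    (hC_pointed : C ∩ (-C) = {0})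
    (hC_ne : C ≠ {0})
    (UpperIm : Set (Fin q → ℝ))
    (hUpperIm : UpperIm = {y | ∃ x ∈ S, ∃ cc ∈ C, y = P.mulVec x + cc})
    (hUpperIm_ne : UpperIm.Nonempty)
    (M : Set ((Fin q → ℝ) × ℝ))
    (hM : M = {zζ | ∃ y ∈ UpperIm, y ≤ zζ.1 ∧ -(∑ i, y i) ≤ zζ.2}) :
    (∀ c ∈ C, c ≠ 0 →
      (∀ zbar ∈ M, ∀ l : ℝ, 0 ≤ l → zbar + l • (c, -(∑ i, c i)) ∈ M) ∧
      ¬((0 : Fin q → ℝ) ≤ c ∧ (0 : ℝ) ≤ -(∑ i, c i))) ∧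
    ¬({d : (Fin q → ℝ) × ℝ | ∀ zbar ∈ M, ∀ l : ℝ, 0 ≤ l → zbar + l • d ∈ M} ⊆
        {d | 0 ≤ d.1 ∧ 0 ≤ d.2}) :=
  stmt9_general q n P S C hC_poly hC_ne UpperIm hUpperIm M hM
end

section
/- Let C ⊆ ℝ^q be a polyhedral convex cone, define P̄x := (Px, −eᵀPx) ∈ ℝ^{q+1}, R := ℝ^{q+1}₊ + {(c, −eᵀc) | c ∈ C} ⊆ ℝ^{q+1}, H := {y ∈ ℝ^{q+1} | eᵀy = 0}, and let π : ℝ^{q+1} → ℝ^q be the projection cancelling the last component. Let ℳ := {P̄x | x ∈ S} + R be the upper image of the problem VLP''. Then 𝒫 = π(ℳ ∩ H), where 𝒫 := P[S] + C. -/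
/-!
Every lifted vector `(v, -eᵀv)` lies in `H`, so a point `P̄x + l + (c, -eᵀc)` of `ℳ` lies in `H`
exactly when `eᵀl = 0`, which for `l ≥ 0` forces `l = 0`; its projection is then `Px + c`.
Conversely `Px + c` is the projection of `P̄x + (c, -eᵀc) ∈ ℳ ∩ H`.
-/

open Finset

section LiftToHyperplane

variable {ι : Type*} [Fintype ι]

/-- `eᵀy`; the hyperplane `H` is its kernel. -/
def coordSum (y : (ι → ℝ) × ℝ) : ℝ := ∑ i, y.1 i + y.2

lemma coordSum_add (y z : (ι → ℝ) × ℝ) : coordSum (y + z) = coordSum y + coordSum z := by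
  simp only [coordSum, Prod.fst_add, Prod.snd_add, Pi.add_apply, sum_add_distrib]
  ring

lemma coordSum_lift (v : ι → ℝ) : coordSum (v, -∑ i, v i) = 0 := by
  simp [coordSum]

lemma fst_eq_zero_of_nonneg_of_coordSum_eq_zero {l : (ι → ℝ) × ℝ} (h₁ : 0 ≤ l.1)
    (h₂ : 0 ≤ l.2) (h : coordSum l = 0) : l.1 = 0 := by
  refine (Fintype.sum_eq_zero_iff_of_nonneg h₁).1 (le_antisymm ?_ (sum_nonneg fun i _ => h₁ i))
  unfold coordSum at h
  linarith

lemma fst_lift_add_eq_of_coordSum_eq_zero {v c : ι → ℝ} {l : (ι → ℝ) × ℝ} (h₁ : 0 ≤ l.1)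
    (h₂ : 0 ≤ l.2) (h : coordSum ((v, -∑ i, v i) + (l + (c, -∑ i, c i))) = 0) :
    ((v, -∑ i, v i) + (l + (c, -∑ i, c i))).1 = v + c := by
  rw [coordSum_add, coordSum_add, coordSum_lift, coordSum_lift] at h
  have hl : l.1 = 0 := fst_eq_zero_of_nonneg_of_coordSum_eq_zero h₁ h₂ (by linarith)
  simp [hl]

end LiftToHyperplane

theorem stmt10_general (q n : ℕ)
    (P : Matrix (Fin q) (Fin n) ℝ)
    (S : Set (Fin n → ℝ))
    (C : Set (Fin q → ℝ))
    (R : Set ((Fin q → ℝ) × ℝ))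
    (hR : R = {r | ∃ l : (Fin q → ℝ) × ℝ, 0 ≤ l.1 ∧ 0 ≤ l.2 ∧
      ∃ cc ∈ C, r = l + (cc, -(∑ i, cc i))})
    (M : Set ((Fin q → ℝ) × ℝ))
    (hM : M = {zζ | ∃ x ∈ S, ∃ r ∈ R, zζ = (P.mulVec x, -(∑ i, P.mulVec x i)) + r}) :
    {y | ∃ x ∈ S, ∃ cc ∈ C, y = P.mulVec x + cc} =
      Prod.fst '' (M ∩ {zζ | (∑ i, zζ.1 i) + zζ.2 = 0}) := by
  subst hR hM
  ext y
  constructor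
  · rintro ⟨x, hx, cc, hcc, rfl⟩
    have hlift : coordSum ((P.mulVec x, -∑ i, (P.mulVec x) i) + (0 + (cc, -∑ i, cc i))) = 0 := by
      rw [zero_add, coordSum_add, coordSum_lift, coordSum_lift, add_zero]
    exact ⟨_, ⟨⟨x, hx, _, ⟨0, le_rfl, le_rfl, cc, hcc, rfl⟩, rfl⟩, hlift⟩, by simp⟩
  · rintro ⟨_, ⟨⟨x, hx, _, ⟨l, hl₁, hl₂, cc, hcc, rfl⟩, rfl⟩, hH⟩, rfl⟩
    exact ⟨x, hx, cc, hcc, fst_lift_add_eq_of_coordSum_eq_zero hl₁ hl₂ hH⟩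

/-- For a polyhedral convex cone `C`, the lifted problem VLP'' with
ordering cone `R = ℝ^{q+1}₊ + {(c, −eᵀc) | c ∈ C}` has upper image `ℳ` satisfying
`𝒫 = π(ℳ ∩ H)` where `H = {y | eᵀy = 0}` and `π` cancels the last component. -/
theorem stmt10 (q m n : ℕ)
    (A : Matrix (Fin m) (Fin n) ℝ) (P : Matrix (Fin q) (Fin n) ℝ) (b : Fin m → ℝ)
    (S : Set (Fin n → ℝ)) (hS : S = {x | b ≤ A.mulVec x})
    (C : Set (Fin q → ℝ))
    (hC_poly : ∃ (p : ℕ) (Z : Matrix (Fin p) (Fin q) ℝ), C = {y | 0 ≤ Z.mulVec y})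
    (R : Set ((Fin q → ℝ) × ℝ))
    (hR : R = {r | ∃ l : (Fin q → ℝ) × ℝ, 0 ≤ l.1 ∧ 0 ≤ l.2 ∧
      ∃ cc ∈ C, r = l + (cc, -(∑ i, cc i))})
    (M : Set ((Fin q → ℝ) × ℝ))
    (hM : M = {zζ | ∃ x ∈ S, ∃ r ∈ R, zζ = (P.mulVec x, -(∑ i, P.mulVec x i)) + r}) :
    {y | ∃ x ∈ S, ∃ cc ∈ C, y = P.mulVec x + cc} =
      Prod.fst '' (M ∩ {zζ | (∑ i, zζ.1 i) + zζ.2 = 0}) :=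
  stmt10_general q n P S C R hR M hM
end

section
/- Let f : ℝ^q → ℝ ∪ {±∞} and let C ⊆ ℝ^q be a convex cone such that f is C-monotone on P[S] − C. Define f̄ : ℝ^{q+1} → ℝ ∪ {±∞} by f̄(y, η) := f(y) if eᵀy + η ≥ 0 and f̄(y, η) := −∞ otherwise, P̄x := (Px, −eᵀPx), and R := ℝ^{q+1}₊ + {(c, −eᵀc) | c ∈ C}. Then f̄ is R-monotone on the set P̄[S] − R. -/
/-!
The coordinate sum `eᵀy + η` vanishes on `P̄x` and on `(c, -eᵀc)`, and is nonnegative on `R`, with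
equality only on the `C`-part of `R`. So it is `≤ 0` on `P̄[S] − R`, and `f̄ z ≠ −∞` forces it to be
`0`, in which case `z` lies in `P[S] − C` in its first component. If `z₁ − z₂ ∈ R` and
`f̄ z₂ ≠ −∞`, then the sums at `z₁`, `z₂` and `z₁ − z₂` all vanish, so `z₁ − z₂` lies in the
`C`-part of `R` and the `C`-monotonicity of `f` applies.
-/

open Finset

variable {ι : Type*} [Fintype ι]

def totalSum : ((ι → ℝ) × ℝ) →ₗ[ℝ] ℝ :=
  LinearMap.coprod (∑ i, LinearMap.proj i) LinearMap.id

@[simp]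
lemma totalSum_apply (z : (ι → ℝ) × ℝ) : totalSum z = ∑ i, z.1 i + z.2 := by
  simp [totalSum]

/-- The cone `R` of the statement. -/
def liftedCone (C : Set (ι → ℝ)) : Set ((ι → ℝ) × ℝ) :=
  {r | ∃ l : (ι → ℝ) × ℝ, 0 ≤ l.1 ∧ 0 ≤ l.2 ∧ ∃ cc ∈ C, r = l + (cc, -(∑ i, cc i))}

lemma totalSum_lift (y : ι → ℝ) : totalSum (y, -(∑ i, y i)) = 0 := by
  simp

lemma totalSum_nonneg {l : (ι → ℝ) × ℝ} (h₁ : 0 ≤ l.1) (h₂ : 0 ≤ l.2) : 0 ≤ totalSum l := by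
  rw [totalSum_apply]
  exact add_nonneg (sum_nonneg fun i _ => h₁ i) h₂

lemma fst_eq_zero_of_totalSum_eq_zero {l : (ι → ℝ) × ℝ} (h₁ : 0 ≤ l.1) (h₂ : 0 ≤ l.2)
    (h : totalSum l = 0) : l.1 = 0 := by
  have hsum : ∑ i, l.1 i = 0 := by
    rw [totalSum_apply] at h
    linarith [sum_nonneg fun i (_ : i ∈ univ) => h₁ i]
  funext i
  exact (sum_eq_zero_iff_of_nonneg fun j _ => h₁ j).mp hsum i (mem_univ i)

lemma totalSum_nonneg_of_mem_liftedCone {C : Set (ι → ℝ)} {r : (ι → ℝ) × ℝ}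
    (hr : r ∈ liftedCone C) : 0 ≤ totalSum r := by
  obtain ⟨l, hl₁, hl₂, c, -, rfl⟩ := hr
  rw [map_add, totalSum_lift, add_zero]
  exact totalSum_nonneg hl₁ hl₂

lemma fst_mem_of_mem_liftedCone_of_totalSum_eq_zero {C : Set (ι → ℝ)} {r : (ι → ℝ) × ℝ}
    (hr : r ∈ liftedCone C) (h : totalSum r = 0) : r.1 ∈ C := by
  obtain ⟨l, hl₁, hl₂, c, hc, rfl⟩ := hr
  rw [map_add, totalSum_lift, add_zero] at h
  simpa [fst_eq_zero_of_totalSum_eq_zero hl₁ hl₂ h] using hc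

lemma totalSum_lift_sub (y : ι → ℝ) (r : (ι → ℝ) × ℝ) :
    totalSum ((y, -(∑ i, y i)) - r) = -totalSum r := by
  rw [map_sub, totalSum_lift, zero_sub]

theorem stmt11_general (q n : ℕ)
    (P : Matrix (Fin q) (Fin n) ℝ)
    (S : Set (Fin n → ℝ))
    (C : Set (Fin q → ℝ))
    (f : (Fin q → ℝ) → EReal)
    (hmono : ∀ x ∈ {v | ∃ s ∈ S, ∃ cc ∈ C, v = P.mulVec s - cc},
             ∀ y ∈ {v | ∃ s ∈ S, ∃ cc ∈ C, v = P.mulVec s - cc},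
             y - x ∈ C → f x ≤ f y)
    (fbar : ((Fin q → ℝ) × ℝ) → EReal)
    (hfbar : ∀ y η, fbar (y, η) = if 0 ≤ (∑ i, y i) + η then f y else ⊥)
    (R : Set ((Fin q → ℝ) × ℝ))
    (hR : R = {r | ∃ l : (Fin q → ℝ) × ℝ, 0 ≤ l.1 ∧ 0 ≤ l.2 ∧
      ∃ cc ∈ C, r = l + (cc, -(∑ i, cc i))}) :
    ∀ z1 ∈ {z | ∃ s ∈ S, ∃ r ∈ R, z = (P.mulVec s, -(∑ i, P.mulVec s i)) - r},
    ∀ z2 ∈ {z | ∃ s ∈ S, ∃ r ∈ R, z = (P.mulVec s, -(∑ i, P.mulVec s i)) - r},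
      z1 - z2 ∈ R → fbar z2 ≤ fbar z1 := by
  subst hR
  rintro z₁ ⟨s₁, hs₁, r₁, hr₁, hz₁⟩ z₂ ⟨s₂, hs₂, r₂, hr₂, hz₂⟩ hr
  have hfbar' : ∀ z, fbar z = if 0 ≤ totalSum z then f z.1 else ⊥ := fun z => by
    simpa using hfbar z.1 z.2
  have e₁ : totalSum z₁ = -totalSum r₁ := hz₁ ▸ totalSum_lift_sub _ _
  have e₂ : totalSum z₂ = -totalSum r₂ := hz₂ ▸ totalSum_lift_sub _ _
  have hr₁0 := totalSum_nonneg_of_mem_liftedCone hr₁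
  have hr₂0 := totalSum_nonneg_of_mem_liftedCone hr₂
  have hr0 := totalSum_nonneg_of_mem_liftedCone hr
  rw [map_sub, e₁, e₂] at hr0
  rw [hfbar', hfbar']
  by_cases h₂ : 0 ≤ totalSum z₂
  · have hr₂_eq : totalSum r₂ = 0 := by linarith
    have hr₁_eq : totalSum r₁ = 0 := by linarith
    have hr_eq : totalSum (z₁ - z₂) = 0 := by
      rw [map_sub, e₁, e₂, hr₁_eq, hr₂_eq, neg_zero, sub_zero]
    rw [if_pos h₂, if_pos (by linarith)]
    exact hmono _ ⟨s₂, hs₂, r₂.1,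
        fst_mem_of_mem_liftedCone_of_totalSum_eq_zero hr₂ hr₂_eq, by rw [hz₂]; rfl⟩
      _ ⟨s₁, hs₁, r₁.1, fst_mem_of_mem_liftedCone_of_totalSum_eq_zero hr₁ hr₁_eq, by rw [hz₁]; rfl⟩
      (fst_mem_of_mem_liftedCone_of_totalSum_eq_zero hr hr_eq)
  · rw [if_neg h₂]
    exact bot_le

/-- If `f` is `C`-monotone on `P[S] − C`, then the lifted function
`f̄(y, η) = f(y)` if `eᵀy + η ≥ 0`, `−∞` otherwise, is `R`-monotone on `P̄[S] − R`,
where `P̄x = (Px, −eᵀPx)` and `R = ℝ^{q+1}₊ + {(c, −eᵀc) | c ∈ C}`. -/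
theorem stmt11 (q m n : ℕ)
    (A : Matrix (Fin m) (Fin n) ℝ) (P : Matrix (Fin q) (Fin n) ℝ) (b : Fin m → ℝ)
    (S : Set (Fin n → ℝ)) (hS : S = {x | b ≤ A.mulVec x})
    (C : Set (Fin q → ℝ))
    (hC_convex : Convex ℝ C)
    (hC_cone : ∀ (t : ℝ), 0 ≤ t → ∀ c ∈ C, t • c ∈ C)
    (f : (Fin q → ℝ) → EReal)
    (hmono : ∀ x ∈ {v | ∃ s ∈ S, ∃ cc ∈ C, v = P.mulVec s - cc},
             ∀ y ∈ {v | ∃ s ∈ S, ∃ cc ∈ C, v = P.mulVec s - cc},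
             y - x ∈ C → f x ≤ f y)
    (fbar : ((Fin q → ℝ) × ℝ) → EReal)
    (hfbar : ∀ y η, fbar (y, η) = if 0 ≤ (∑ i, y i) + η then f y else ⊥)
    (R : Set ((Fin q → ℝ) × ℝ))
    (hR : R = {r | ∃ l : (Fin q → ℝ) × ℝ, 0 ≤ l.1 ∧ 0 ≤ l.2 ∧
      ∃ cc ∈ C, r = l + (cc, -(∑ i, cc i))}) :
    ∀ z1 ∈ {z | ∃ s ∈ S, ∃ r ∈ R, z = (P.mulVec s, -(∑ i, P.mulVec s i)) - r},
    ∀ z2 ∈ {z | ∃ s ∈ S, ∃ r ∈ R, z = (P.mulVec s, -(∑ i, P.mulVec s i)) - r},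
      z1 - z2 ∈ R → fbar z2 ≤ fbar z1 :=
  stmt11_general q n P S C f hmono fbar hfbar R hR
end
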